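/- arXiv:2502.02039 — 9 statements merged into one kernel-verified Lean document; each statement's English description precedes it below -/
import Mathlib

section
/- Let G be a discrete group acting continuously and minimally on an infinite compact Hausdorff space Z. Suppose there exists g ∈ G and points x, y ∈ Z fixed by g such that g has north–south dynamics with respect to x and y. Then the action is a strong boundary action: for every compact subset F ⊆ Z with F ≠ Z and every nonempty open subset O ⊆ Z there exists h ∈ G with h·F ⊆ O. -/
/-! By minimality choose `b` with `b • x ∈ O` and `c` with `c • y ∉ F`.
Then `U = b⁻¹ • O` is a neighbourhood of `x` and `V = c⁻¹ • Fᶜ` one of `y`; north–south dynamics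
gives `k` with `k • Vᶜ ⊆ U`, and `h = b * k * c⁻¹` maps `F = c • Vᶜ` into `O`. -/

open MulAction

theorem Dense.exists_smul_mem {G Z : Type*} [Group G] [TopologicalSpace Z] [MulAction G Z]
    {x : Z} (hx : Dense (orbit G x)) {O : Set Z} (hO : IsOpen O) (hOne : O.Nonempty) :
    ∃ b : G, b • x ∈ O := by
  obtain ⟨_, ⟨b, rfl⟩, hb⟩ := hx.exists_mem_open hO hOne
  exact ⟨b, hb⟩

theorem exists_smul_mapsTo_of_contracting {G Z : Type*} [Group G] [TopologicalSpace Z]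
    [MulAction G Z] [ContinuousConstSMul G Z] {x y : Z}
    (hx : Dense (orbit G x)) (hy : Dense (orbit G y))
    (hcontract : ∀ U V : Set Z, IsOpen U → IsOpen V → x ∈ U → y ∈ V →
      ∃ k : G, ∀ z ∉ V, k • z ∈ U)
    {F : Set Z} (hF : IsClosed F) (hFne : F ≠ Set.univ) {O : Set Z} (hO : IsOpen O)
    (hOne : O.Nonempty) :
    ∃ h : G, Set.MapsTo (h • ·) F O := by
  obtain ⟨b, hb⟩ := hx.exists_smul_mem hO hOne
  obtain ⟨c, hc⟩ := hy.exists_smul_mem hF.isOpen_compl (Set.nonempty_compl.2 hFne)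
  obtain ⟨k, hk⟩ := hcontract ((b • ·) ⁻¹' O) ((c • ·) ⁻¹' Fᶜ)
    (hO.preimage (continuous_const_smul b)) (hF.isOpen_compl.preimage (continuous_const_smul c))
    hb hc
  refine ⟨b * k * c⁻¹, fun z hz => ?_⟩
  have hkz : b • k • c⁻¹ • z ∈ O := hk (c⁻¹ • z) (by simpa using hz)
  simpa only [mul_smul] using hkz

theorem strong_boundary_of_north_south_dynamics_general
    {G Z : Type*} [Group G] [TopologicalSpace Z] [T2Space Z]
    [MulAction G Z]
    (hcont : ∀ g : G, Continuous fun z : Z => g • z)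
    (hmin : ∀ z : Z, Dense (MulAction.orbit G z))
    (g : G) (x y : Z)
    (hns : ∀ U V : Set Z, IsOpen U → IsOpen V → x ∈ U → y ∈ V →
      ∃ m : ℕ, (∀ z ∉ V, g ^ m • z ∈ U) ∧ (∀ z ∉ U, (g ^ m)⁻¹ • z ∈ V)) :
    ∀ F : Set Z, IsCompact F → F ≠ Set.univ → ∀ O : Set Z, IsOpen O → O.Nonempty →
      ∃ h : G, ∀ z ∈ F, h • z ∈ O := by
  intro F hF hFne O hO hOne
  have : ContinuousConstSMul G Z := ⟨hcont⟩
  refine exists_smul_mapsTo_of_contracting (hmin x) (hmin y) (fun U V hU hV hxU hyV => ?_)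
    hF.isClosed hFne hO hOne
  obtain ⟨m, hm, -⟩ := hns U V hU hV hxU hyV
  exact ⟨g ^ m, hm⟩

/-- Let `G` be a discrete group acting continuously and minimally on an
infinite compact Hausdorff space `Z`. Suppose there exists `g ∈ G` and points `x, y ∈ Z`
fixed by `g` such that `g` has north–south dynamics with respect to `x` and `y`. Then the
action is a strong boundary action: for every compact subset `F ⊆ Z` with `F ≠ Z` and
every nonempty open subset `O ⊆ Z` there exists `h ∈ G` with `h • F ⊆ O`. -/
theorem strong_boundary_of_north_south_dynamics
    {G Z : Type*} [Group G] [TopologicalSpace Z] [CompactSpace Z] [T2Space Z] [Infinite Z]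
    [MulAction G Z]
    (hcont : ∀ g : G, Continuous fun z : Z => g • z)
    (hmin : ∀ z : Z, Dense (MulAction.orbit G z))
    (g : G) (x y : Z) (hx : g • x = x) (hy : g • y = y)
    (hns : ∀ U V : Set Z, IsOpen U → IsOpen V → x ∈ U → y ∈ V →
      ∃ m : ℕ, (∀ z ∉ V, g ^ m • z ∈ U) ∧ (∀ z ∉ U, (g ^ m)⁻¹ • z ∈ V)) :
    ∀ F : Set Z, IsCompact F → F ≠ Set.univ → ∀ O : Set Z, IsOpen O → O.Nonempty →
      ∃ h : G, ∀ z ∈ F, h • z ∈ O :=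
  strong_boundary_of_north_south_dynamics_general hcont hmin g x y hns
end

section
/- Let α be a type containing two distinct elements a and b, and let 𝔽 denote the free group on α (utilizing that the rank is at least 2). Let F be a finite set of elements of 𝔽 and let E be a finite set of elements of 𝔽 each of whose reduced words does not end with the letter a or its inverse a⁻¹. Then there exists a nontrivial element g ∈ 𝔽 with g ∉ E, whose reduced word does not end with a or a⁻¹, such that w·g ∉ ⟨a⟩ for every w ∈ F, and g⁻¹·w·g ∉ ⟨a⟩ for every w ∈ F with w ≠ 1, where ⟨a⟩ denotes the cyclic subgroup of 𝔽 generated by the generator corresponding to a. -/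
/-!
Take `g = bⁿ` for a natural number `n`. The exponent sum of `b` shows that `w * bⁿ ∈ ⟨a⟩` for at
most one `n`. If `b⁻ⁿ w bⁿ = aᵏ` and `b⁻ᵐ w bᵐ = aʲ`, the exponent sum of `a` gives `j = k`, so
`aᵏ` commutes with `bⁿ⁻ᵐ`; since `aᵏ` and `bᵈ` only commute when `k = 0` or `d = 0`, and `k = 0`
would force `w = 1`, again at most one `n` is bad. Since `n ↦ bⁿ` is injective, all but finitely
many `n` also avoid `E`, and the reduced word of `bⁿ` ends in `b`.
-/

namespace FreeGroup

variable {α : Type*} [DecidableEq α]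

def exponentSum (c : α) : FreeGroup α →* Multiplicative ℤ :=
  lift (Pi.mulSingle c (Multiplicative.ofAdd 1))

lemma exponentSum_of_zpow_self (c : α) (k : ℤ) :
    exponentSum c (of c ^ k) = Multiplicative.ofAdd k := by
  simp [exponentSum, ← ofAdd_zsmul]

lemma exponentSum_of_zpow_of_ne {c d : α} (h : d ≠ c) (k : ℤ) : exponentSum c (of d ^ k) = 1 := by
  simp [exponentSum, Pi.mulSingle_eq_of_ne h]

lemma zpow_of_injective (c : α) : Function.Injective fun k : ℤ => of c ^ k := fun k l h => by
  simpa [exponentSum_of_zpow_self] using congrArg (exponentSum c) h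

/-- Acting on `ℚ` by `a ↦ (x ↦ x + 1)`, `b ↦ (x ↦ 2x)`, `aᵏbᵈ` sends `0` to `k` and `bᵈaᵏ`
sends it to `2ᵈk`. -/
lemma commute_of_zpow_of_zpow_iff {a b : α} (hab : a ≠ b) {k d : ℤ} :
    Commute (of a ^ k) (of b ^ d) ↔ k = 0 ∨ d = 0 := by
  refine ⟨fun h => ?_, by rintro (rfl | rfl) <;> simp⟩
  let φ : FreeGroup α →* Equiv.Perm ℚ := lift fun x =>
    if x = a then Equiv.addLeft 1 else MulAction.toPermHom ℚˣ ℚ (Units.mk0 2 two_ne_zero)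
  have translate : ∀ x, φ (of a ^ k) x = k + x := by simp [φ]
  have dilate : ∀ x, φ (of b ^ d) x = 2 ^ d * x := fun x => by
    rw [map_zpow, lift_apply_of, if_neg hab.symm, ← map_zpow]
    simp [Units.smul_def]
  have h0 := DFunLike.congr_fun (congrArg φ h.eq) 0
  simp only [_root_.map_mul, Equiv.Perm.mul_apply, translate, dilate] at h0
  have h2 : (2 : ℚ) ^ d * k = k := by simpa using h0.symm
  rcases eq_or_ne (k : ℚ) 0 with hk | hk
  · exact .inl (by exact_mod_cast hk)
  · exact .inr ((zpow_eq_one_iff_right₀ (by norm_num) (by norm_num)).1 ((mul_eq_right₀ hk).1 h2))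

lemma eq_zero_or_eq_zero_of_conj_mem_zpowers {a b : α} (hab : a ≠ b) {k d : ℤ}
    (h : of b ^ d * of a ^ k * (of b ^ d)⁻¹ ∈ Subgroup.zpowers (of a)) : k = 0 ∨ d = 0 := by
  obtain ⟨j, hj⟩ := h
  have hjk : j = k := by
    simpa [exponentSum_of_zpow_self, exponentSum_of_zpow_of_ne hab.symm] using
      congrArg (exponentSum a) hj
  subst hjk
  exact (commute_of_zpow_of_zpow_iff hab).1 (eq_mul_inv_iff_mul_eq.1 hj)

lemma setOf_mul_of_zpow_mem_zpowers_subsingleton {a b : α} (hab : a ≠ b) (w : FreeGroup α) :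
    {n : ℤ | w * of b ^ n ∈ Subgroup.zpowers (of a)}.Subsingleton := by
  rintro n ⟨k, hn⟩ m ⟨l, hm⟩
  have hn' := congrArg (exponentSum b) hn
  have hm' := congrArg (exponentSum b) hm
  simp only [_root_.map_mul, exponentSum_of_zpow_self, exponentSum_of_zpow_of_ne hab] at hn' hm'
  exact Multiplicative.ofAdd.injective (mul_left_cancel (hn'.symm.trans hm'))

lemma setOf_conj_of_zpow_mem_zpowers_subsingleton {a b : α} (hab : a ≠ b) {w : FreeGroup α}
    (hw : w ≠ 1) :
    {n : ℤ | (of b ^ n)⁻¹ * w * of b ^ n ∈ Subgroup.zpowers (of a)}.Subsingleton := by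
  rintro n ⟨k, hn⟩ m hm
  have hw' : w = of b ^ n * of a ^ k * (of b ^ n)⁻¹ := by
    simp only at hn
    rw [hn]; group
  have hconj : of b ^ (n - m) * of a ^ k * (of b ^ (n - m))⁻¹ ∈ Subgroup.zpowers (of a) := by
    have hconj_eq : of b ^ (n - m) * of a ^ k * (of b ^ (n - m))⁻¹ =
        (of b ^ m)⁻¹ * w * of b ^ m := by
      rw [hw']; group
    exact hconj_eq ▸ hm
  rcases eq_zero_or_eq_zero_of_conj_mem_zpowers hab hconj with rfl | h
  · exact absurd (by simpa using hw') hw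
  · exact sub_eq_zero.1 h

end FreeGroup

open FreeGroup in
theorem freeGroup_avoid_cyclic_subgroup_general
    {α : Type*} [DecidableEq α] (a b : α) (hab : a ≠ b)
    (F E : Finset (FreeGroup α)) :
    ∃ g : FreeGroup α, g ≠ 1 ∧ g ∉ E ∧
      (∀ l ∈ (FreeGroup.toWord g).getLast?, l.1 ≠ a) ∧
      (∀ w ∈ F, w * g ∉ Subgroup.zpowers (FreeGroup.of a)) ∧
      (∀ w ∈ F, w ≠ 1 → g⁻¹ * w * g ∉ Subgroup.zpowers (FreeGroup.of a)) := by
  have good : ∀ᶠ n : ℤ in Filter.cofinite, n ≠ 0 ∧ of b ^ n ∉ E ∧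
      (∀ w ∈ F, w * of b ^ n ∉ Subgroup.zpowers (of a)) ∧
      ∀ w ∈ F, w ≠ 1 → (of b ^ n)⁻¹ * w * of b ^ n ∉ Subgroup.zpowers (of a) :=
    (Filter.eventually_cofinite_ne 0).and <|
      ((zpow_of_injective b).tendsto_cofinite.eventually E.eventually_cofinite_notMem).and <|
      ((Filter.eventually_all_finset F).2 fun w _ =>
        (setOf_mul_of_zpow_mem_zpowers_subsingleton hab w).finite.eventually_cofinite_notMem).and <|
      (Filter.eventually_all_finset F).2 fun _ _ => Filter.eventually_imp_distrib_left.2 fun hw =>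
        (setOf_conj_of_zpow_mem_zpowers_subsingleton hab hw).finite.eventually_cofinite_notMem
  obtain ⟨n, hn0, hnE, hF, hconj⟩ := (Nat.cast_injective.tendsto_cofinite.eventually good).exists
  have hg : of b ^ (n : ℤ) ≠ 1 := by simpa using (zpow_of_injective b).ne hn0
  rw [zpow_natCast] at hg hnE hF hconj
  refine ⟨of b ^ n, hg, hnE, fun l hl => ?_, hF, hconj⟩
  rw [toWord_of_pow] at hl
  rw [List.eq_of_mem_replicate (List.mem_of_mem_getLast? hl)]
  exact hab.symm

/-- Let `α` contain two distinct elements `a` and `b`, and let `𝔽` be the free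
group on `α`. Let `F` be a finite set of elements of `𝔽` and `E` a finite set of elements of `𝔽`
whose reduced words do not end with the letter `a` or its inverse `a⁻¹`. Then there exists a
nontrivial `g ∈ 𝔽` with `g ∉ E`, whose reduced word does not end with `a` or `a⁻¹`, such that
`w * g ∉ ⟨a⟩` for every `w ∈ F`, and `g⁻¹ * w * g ∉ ⟨a⟩` for every `w ∈ F` with `w ≠ 1`. -/
theorem freeGroup_avoid_cyclic_subgroup
    {α : Type*} [DecidableEq α] (a b : α) (hab : a ≠ b)
    (F E : Finset (FreeGroup α))
    (hE : ∀ w ∈ E, ∀ l ∈ (FreeGroup.toWord w).getLast?, l.1 ≠ a) :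
    ∃ g : FreeGroup α, g ≠ 1 ∧ g ∉ E ∧
      (∀ l ∈ (FreeGroup.toWord g).getLast?, l.1 ≠ a) ∧
      (∀ w ∈ F, w * g ∉ Subgroup.zpowers (FreeGroup.of a)) ∧
      (∀ w ∈ F, w ≠ 1 → g⁻¹ * w * g ∉ Subgroup.zpowers (FreeGroup.of a)) :=
  freeGroup_avoid_cyclic_subgroup_general a b hab F E
end

section
/- Let G be a group and ι : F₂ → G an injective group homomorphism, where F₂ is the free group on two generators x₀ and x₁; set a = ι(x₀). Let R₁ ⊆ F₂ be the set of all elements whose reduced word does not end with x₀ or x₀⁻¹, and let R₂ ⊆ G be a left transversal of the subgroup ι(F₂) in G containing 1 (i.e., every g ∈ G can be written uniquely as g = r·ι(w) with r ∈ R₂ and w ∈ F₂). Set Σ = {r·ι(w) : r ∈ R₂, w ∈ R₁}. Then for every finite subset F ⊆ G and every finite subset E ⊆ Σ there exists g ∈ Σ with g ∉ E such that f·g ∉ ⟨a⟩ for all f ∈ F, and g⁻¹·f·g ∉ ⟨a⟩ for all f ∈ F with f ≠ 1, where ⟨a⟩ is the cyclic subgroup of G generated by a. -/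
/-!
Take `g = ι(x₁)ⁿ` with `n` large; these lie in `Σ` (with `r = 1`). For a fixed `f`, at most
one `n` has `f·ι(x₁)ⁿ ∈ ⟨a⟩`, since two such `n` would put a nonzero power of `x₁` into `⟨x₀⟩`;
and for `f ≠ 1` at most one `n` has `ι(x₁)⁻ⁿ f ι(x₁)ⁿ ∈ ⟨a⟩`, since two such `n` would conjugate
a nontrivial power of `x₀` into `⟨x₀⟩` by a nonzero power of `x₁`. Both are impossible in `F₂`,
as one sees in its image in the affine permutations of `ℚ` with `x₀ ↦ (t ↦ 2t)`,
`x₁ ↦ (t ↦ t + 1)`: `⟨x₀⟩` fixes `0`, while `x₁ᵈ x₀ᵏ x₁⁻ᵈ` sends `0` to `(1 - 2ᵏ) d`.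
-/

/-- The set `Σ = {r·ι(w) : r ∈ R₂, w ∈ R₁}`, where `R₁` is the set of elements of the free
group on two generators whose reduced word does not end with the generator `x₀ = 0` or its
inverse. -/
def transversalWordSet {G : Type*} [Group G] (ι : FreeGroup (Fin 2) →* G) (R₂ : Set G) :
    Set G :=
  {g : G | ∃ r ∈ R₂, ∃ w : FreeGroup (Fin 2),
    (∀ l ∈ (FreeGroup.toWord w).getLast?, l.1 ≠ 0) ∧ g = r * ι w}

section PowAvoid

variable {G : Type*} [Group G] {H : Subgroup G} {b : G}

theorem subsingleton_setOf_mul_pow_mem (hb : ∀ d : ℤ, b ^ d ∈ H → d = 0) (f : G) :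
    {n : ℕ | f * b ^ n ∈ H}.Subsingleton := by
  intro n hn m hm
  have hdiff : b ^ ((m : ℤ) - n) = (f * b ^ n)⁻¹ * (f * b ^ m) := by
    rw [zpow_sub, zpow_natCast, zpow_natCast]
    group
  have := hb _ (hdiff ▸ H.mul_mem (H.inv_mem hn) hm)
  omega

theorem subsingleton_setOf_conj_pow_mem
    (hb : ∀ d : ℤ, ∀ h ∈ H, h ≠ 1 → b ^ d * h * (b ^ d)⁻¹ ∈ H → d = 0) {f : G} (hf : f ≠ 1) :
    {n : ℕ | (b ^ n)⁻¹ * f * b ^ n ∈ H}.Subsingleton := by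
  intro n hn m hm
  have hconj : b ^ ((m : ℤ) - n) * ((b ^ m)⁻¹ * f * b ^ m) * (b ^ ((m : ℤ) - n))⁻¹
      = (b ^ n)⁻¹ * f * b ^ n := by
    rw [zpow_sub, zpow_natCast, zpow_natCast]
    group
  have := hb _ _ hm (by simpa [mul_assoc, inv_mul_eq_one] using hf) (by rwa [hconj])
  omega

theorem exists_pow_avoiding_of_zpow_mem_eq_zero
    (hb₁ : ∀ d : ℤ, b ^ d ∈ H → d = 0)
    (hb₂ : ∀ d : ℤ, ∀ h ∈ H, h ≠ 1 → b ^ d * h * (b ^ d)⁻¹ ∈ H → d = 0) (F E : Finset G) :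
    ∃ n : ℕ, b ^ n ∉ E ∧ (∀ f ∈ F, f * b ^ n ∉ H) ∧
      ∀ f ∈ F, f ≠ 1 → (b ^ n)⁻¹ * f * b ^ n ∉ H := by
  classical
  have hinj : Function.Injective (b ^ · : ℕ → G) := by
    intro n m (h : b ^ n = b ^ m)
    have := hb₁ ((m : ℤ) - n) <| by
      rw [zpow_sub, zpow_natCast, zpow_natCast, ← h, mul_inv_cancel]
      exact H.one_mem
    omega
  have hbad : ({n : ℕ | b ^ n ∈ E} ∪ (⋃ f ∈ F, {n : ℕ | f * b ^ n ∈ H}) ∪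
      ⋃ f ∈ F.erase 1, {n : ℕ | (b ^ n)⁻¹ * f * b ^ n ∈ H}).Finite :=
    ((E.finite_toSet.preimage hinj.injOn).union
      (F.finite_toSet.biUnion fun f _ => (subsingleton_setOf_mul_pow_mem hb₁ f).finite)).union
      ((F.erase 1).finite_toSet.biUnion fun f hf =>
        (subsingleton_setOf_conj_pow_mem hb₂ (Finset.ne_of_mem_erase hf)).finite)
  obtain ⟨n, hn⟩ := hbad.exists_notMem
  simp only [Set.mem_union, Set.mem_iUnion, Set.mem_ofPred_eq, not_or,
    not_exists] at hn
  exact ⟨n, hn.1.1, fun f hf => hn.1.2 f hf, fun f hf h1 => hn.2 f (Finset.mem_erase.mpr ⟨h1, hf⟩)⟩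

end PowAvoid

section MapInjective

variable {G N : Type*} [Group G] [Group N] {φ : G →* N} {K : Subgroup G} {b : G}

theorem eq_zero_of_map_zpow_mem_map (hφ : Function.Injective φ)
    (hb : ∀ d : ℤ, b ^ d ∈ K → d = 0) (d : ℤ) (hd : φ b ^ d ∈ K.map φ) : d = 0 :=
  hb d <| by rwa [← map_zpow, Subgroup.mem_map_iff_mem hφ] at hd

theorem eq_zero_of_conj_map_zpow_mem_map (hφ : Function.Injective φ)
    (hb : ∀ d : ℤ, ∀ h ∈ K, h ≠ 1 → b ^ d * h * (b ^ d)⁻¹ ∈ K → d = 0) (d : ℤ) :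
    ∀ h ∈ K.map φ, h ≠ 1 → φ b ^ d * h * (φ b ^ d)⁻¹ ∈ K.map φ → d = 0 := by
  rintro _ ⟨h, hh, rfl⟩ h1 hconj
  refine hb d h hh (by rintro rfl; exact h1 (map_one φ)) ?_
  rwa [← map_zpow, ← map_inv, ← map_mul, ← map_mul, Subgroup.mem_map_iff_mem hφ] at hconj

end MapInjective

namespace FreeGroup

variable {α : Type*}

noncomputable def dilationTranslationRep [DecidableEq α] (i : α) :
    FreeGroup α →* Equiv.Perm ℚ :=
  lift fun j => if j = i then MulAction.toPermHom ℚˣ ℚ (Units.mk0 2 two_ne_zero)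
    else Equiv.addRight 1

theorem dilationTranslationRep_of_zpow_self [DecidableEq α] (i : α) (k : ℤ) (t : ℚ) :
    dilationTranslationRep i (of i ^ k) t = 2 ^ k * t := by
  rw [map_zpow, dilationTranslationRep, lift_apply_of, if_pos rfl, ← map_zpow,
    MulAction.toPermHom_apply, MulAction.toPerm_apply, Units.smul_def, smul_eq_mul,
    Units.val_zpow_eq_zpow_val, Units.val_mk0]

theorem dilationTranslationRep_of_zpow_of_ne [DecidableEq α] {i j : α} (hij : i ≠ j) (d : ℤ)
    (t : ℚ) : dilationTranslationRep i (of j ^ d) t = t + d := by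
  rw [map_zpow, dilationTranslationRep, lift_apply_of, if_neg hij.symm, Equiv.zsmul_addRight,
    Equiv.coe_addRight, zsmul_one]

theorem eq_zero_of_of_zpow_mem_zpowers {i j : α} (hij : i ≠ j) {d : ℤ}
    (h : of j ^ d ∈ Subgroup.zpowers (of i)) : d = 0 := by
  classical
  obtain ⟨k, hk⟩ := Subgroup.mem_zpowers_iff.mp h
  have := congrArg (dilationTranslationRep i · 0) hk
  simp only [dilationTranslationRep_of_zpow_self, dilationTranslationRep_of_zpow_of_ne hij,
    mul_zero, zero_add] at this
  exact_mod_cast this.symm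

theorem eq_zero_of_conj_of_zpow_mem_zpowers {i j : α} (hij : i ≠ j) {d : ℤ} {h : FreeGroup α}
    (hh : h ∈ Subgroup.zpowers (of i)) (h1 : h ≠ 1)
    (hconj : of j ^ d * h * (of j ^ d)⁻¹ ∈ Subgroup.zpowers (of i)) : d = 0 := by
  classical
  obtain ⟨k, rfl⟩ := Subgroup.mem_zpowers_iff.mp hh
  obtain ⟨l, hl⟩ := Subgroup.mem_zpowers_iff.mp hconj
  have hk : k ≠ 0 := by
    rintro rfl
    exact h1 (zpow_zero _)
  have h2k : (2 : ℚ) ^ k ≠ 1 := by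
    simpa using (zpow_right_injective₀ two_pos (by norm_num : (2 : ℚ) ≠ 1)).ne hk
  have hval := congrArg (dilationTranslationRep i · 0) hl
  simp only [← zpow_neg, _root_.map_mul, Equiv.Perm.mul_apply, dilationTranslationRep_of_zpow_self,
    dilationTranslationRep_of_zpow_of_ne hij, mul_zero, zero_add, Int.cast_neg] at hval
  have : (d : ℚ) * (1 - 2 ^ k) = 0 := by linear_combination -hval
  simpa [sub_eq_zero, h2k.symm] using this

end FreeGroup

theorem transversalWordSet_avoid_cyclic_subgroup_general
    {G : Type*} [Group G] (ι : FreeGroup (Fin 2) →* G) (hι : Function.Injective ι)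
    (R₂ : Set G) (hone : (1 : G) ∈ R₂)
    (F E : Finset G) :
    ∃ g ∈ transversalWordSet ι R₂, g ∉ E ∧
      (∀ f ∈ F, f * g ∉ Subgroup.zpowers (ι (FreeGroup.of 0))) ∧
      (∀ f ∈ F, f ≠ 1 → g⁻¹ * f * g ∉ Subgroup.zpowers (ι (FreeGroup.of 0))) := by
  have hne : (0 : Fin 2) ≠ 1 := by decide
  simp only [← MonoidHom.map_zpowers]
  obtain ⟨n, hnE, hnF, hnconj⟩ := exists_pow_avoiding_of_zpow_mem_eq_zero
    (eq_zero_of_map_zpow_mem_map hι fun _ => FreeGroup.eq_zero_of_of_zpow_mem_zpowers hne)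
    (eq_zero_of_conj_map_zpow_mem_map hι
      fun _ _ => FreeGroup.eq_zero_of_conj_of_zpow_mem_zpowers hne) F E
  refine ⟨ι (FreeGroup.of 1) ^ n, ⟨1, hone, FreeGroup.of 1 ^ n, ?_, by rw [one_mul, map_pow]⟩,
    hnE, hnF, hnconj⟩
  simp [FreeGroup.toWord_of_pow, List.getLast?_replicate]

/-- Let `G` be a group and `ι : F₂ → G` an injective homomorphism from the
free group on two generators `x₀, x₁`; set `a = ι x₀`. Let `R₁ ⊆ F₂` be the elements whose
reduced word does not end with `x₀` or `x₀⁻¹`, let `R₂ ⊆ G` be a left transversal of `ι(F₂)`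
in `G` containing `1`, and let `Σ = {r·ι(w) : r ∈ R₂, w ∈ R₁}`. Then for all finite
`F ⊆ G` and finite `E ⊆ Σ` there is `g ∈ Σ \ E` with `f·g ∉ ⟨a⟩` for all `f ∈ F` and
`g⁻¹·f·g ∉ ⟨a⟩` for all `f ∈ F`, `f ≠ 1`. -/
theorem transversalWordSet_avoid_cyclic_subgroup
    {G : Type*} [Group G] (ι : FreeGroup (Fin 2) →* G) (hι : Function.Injective ι)
    (R₂ : Set G) (hone : (1 : G) ∈ R₂)
    (htrans : ∀ g : G, ∃! p : R₂ × FreeGroup (Fin 2), g = (p.1 : G) * ι p.2)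
    (F E : Finset G)
    (hE : ∀ x ∈ E, x ∈ transversalWordSet ι R₂) :
    ∃ g ∈ transversalWordSet ι R₂, g ∉ E ∧
      (∀ f ∈ F, f * g ∉ Subgroup.zpowers (ι (FreeGroup.of 0))) ∧
      (∀ f ∈ F, f ≠ 1 → g⁻¹ * f * g ∉ Subgroup.zpowers (ι (FreeGroup.of 0))) :=
  transversalWordSet_avoid_cyclic_subgroup_general ι hι R₂ hone F E
end

section
/- Let m₁, n₁, m₂, n₂ be integers with (m₁,n₁) ≠ (0,0) and (m₂,n₂) ≠ (0,0), and suppose |m₁| ≠ |m₂| or |n₁| ≠ |n₂|. Write the group ℤ² additively, set p = (m₁,n₁) and q = (m₂,n₂), let A = ℤ·p and B = ℤ·q be the infinite cyclic subgroups they generate, and let φ : A → B be a group isomorphism with φ(p) = q. Let G* be the HNN extension of ℤ² with respect to (A, B, φ), with canonical embedding ι : ℤ² → G* and stable letter t satisfying t⁻¹·ι(v)·t = ι(φ(v)) for all v ∈ A. Then for every finite set S of nonzero integers there exists g ∈ G* such that for every x ∈ S, the element g·ι(x·p)·g⁻¹ does not belong to ι(A). -/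
open Multiplicative HNNExtension

/-!
Write `p = (m₁, n₁)`, `q = (m₂, n₂)`. Conjugation by `t⁻¹` sends `ι (y • p)` to `ι (y • q)`.
If `q` is shorter than `p` in some coordinate and `y • q ∈ A`, then `y • q = z • p` with
`0 < |z| < |y|`, so iterating strictly lowers `|y|`: within `|y|` further conjugations one meets
some `y' • q ∉ A`, and Britton's lemma then shows that the conjugate leaves `ι (ℤ²)` altogether.
When `p` is the shorter vector the same descent runs with `t` and `φ⁻¹`.
-/

namespace HNNExtension

variable {G : Type*} [Group G] {A B : Subgroup G} (φ : A ≃* B)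

theorem t_zpow_mul_of_mul_inv (u : ℤˣ) (a : toSubgroup A B u) :
    (t ^ (u : ℤ) * of (a : G) * (t ^ (u : ℤ))⁻¹ : HNNExtension G A B φ) =
      of (toSubgroupEquiv φ u a : G) := by
  rcases Int.units_eq_one_or u with rfl | rfl
  · simp only [Units.val_one, zpow_one, toSubgroupEquiv_one]
    exact (equiv_eq_conj a).symm
  · simp only [Units.val_neg, Units.val_one, zpow_neg, zpow_one, inv_inv, toSubgroupEquiv_neg_one]
    exact (equiv_symm_eq_conj a).symm

theorem t_zpow_pow_succ_conj_notMem_range (u : ℤˣ) (j : ℕ) {c : G}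
    (hc : c ∉ toSubgroup A B u) :
    (t ^ (u : ℤ)) ^ (j + 1) * of c * ((t ^ (u : ℤ)) ^ (j + 1))⁻¹ ∉
      (of : G →* HNNExtension G A B φ).range := by
  intro hmem
  -- The word `t^u ⋯ t^u c t^-u ⋯ t^-u` is reduced: its only candidate pinch is excluded by `hc`.
  let l : List (ℤˣ × G) := List.replicate j (u, 1) ++ (u, c) :: List.replicate (j + 1) (-u, 1)
  have hchain : l.IsChain (fun a b => a.2 ∈ toSubgroup A B a.1 → a.1 = b.1) := by
    refine List.IsChain.append (List.isChain_replicate_of_rel _ fun _ => rfl) ?_ ?_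
    · exact List.isChain_cons.2
        ⟨fun _ _ h => absurd h hc, List.isChain_replicate_of_rel _ fun _ => rfl⟩
    · intro x hx y hy
      obtain rfl : x = (u, 1) := (List.mem_replicate.1 (List.mem_of_mem_getLast? hx)).2
      obtain rfl : y = (u, c) := by simpa using hy.symm
      exact fun _ => rfl
  let w : NormalWord.ReducedWord G A B := ⟨1, l, hchain⟩
  have hprod : w.prod φ = (t ^ (u : ℤ)) ^ (j + 1) * of c * ((t ^ (u : ℤ)) ^ (j + 1))⁻¹ := by
    simp only [w, l, NormalWord.ReducedWord.prod, List.map_append, List.map_cons,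
      List.map_replicate, List.prod_append, List.prod_cons, List.prod_replicate, map_one,
      mul_one, one_mul, Units.val_neg, zpow_neg, inv_pow]
    group
  simpa [w, l] using ReducedWord.toList_eq_nil_of_mem_of_range φ w (hprod ▸ hmem)

theorem t_zpow_pow_conj_zpow_notMem_range (u : ℤˣ) (c : G)
    (hshrink : ∀ y : ℤ, y ≠ 0 → ∀ h : c ^ y ∈ toSubgroup A B u,
      ∃ z : ℤ, z ≠ 0 ∧ z.natAbs < y.natAbs ∧ (toSubgroupEquiv φ u ⟨c ^ y, h⟩ : G) = c ^ z)
    (n : ℕ) {y : ℤ} (hy : y ≠ 0) (hyn : y.natAbs < n) :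
    (t ^ (u : ℤ)) ^ n * of (c ^ y) * ((t ^ (u : ℤ)) ^ n)⁻¹ ∉
      (of : G →* HNNExtension G A B φ).range := by
  induction n generalizing y with
  | zero => exact absurd hyn (Nat.not_lt_zero _)
  | succ n ih =>
    by_cases h : c ^ y ∈ toSubgroup A B u
    · obtain ⟨z, hz, hzy, hψ⟩ := hshrink y hy h
      have hstep : (t ^ (u : ℤ)) ^ (n + 1) * of (c ^ y) * ((t ^ (u : ℤ)) ^ (n + 1))⁻¹ =
          ((t : HNNExtension G A B φ) ^ (u : ℤ)) ^ n * of (c ^ z) * ((t ^ (u : ℤ)) ^ n)⁻¹ := by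
        rw [← hψ, ← t_zpow_mul_of_mul_inv φ u ⟨c ^ y, h⟩]
        group
      rw [hstep]
      exact ih hz (by omega)
    · exact t_zpow_pow_succ_conj_notMem_range φ u n h

end HNNExtension

theorem Prod.natAbs_lt_of_zsmul_eq_zsmul {v w : ℤ × ℤ} (hw : w ≠ 0)
    (hlt : |w.1| < |v.1| ∨ |w.2| < |v.2|) {y z : ℤ} (hy : y ≠ 0) (h : y • w = z • v) :
    z ≠ 0 ∧ z.natAbs < y.natAbs := by
  refine ⟨?_, ?_⟩
  · rintro rfl
    exact (smul_eq_zero.1 (h.trans (zero_smul ℤ v))).elim hy hw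
  · have hcoord : ∀ a b : ℤ, |a| < |b| → y * a = z * b → |z| < |y| := fun a b hab hyz =>
      lt_of_mul_lt_mul_right
        (calc |z| * |b| = |y| * |a| := by rw [← abs_mul, ← abs_mul, hyz]
          _ < |y| * |b| := mul_lt_mul_of_pos_left hab (abs_pos.2 hy))
        (abs_nonneg b)
    have hcomp := Prod.ext_iff.1 h
    simp only [Prod.smul_fst, Prod.smul_snd, smul_eq_mul] at hcomp
    rw [← Int.ofNat_lt, Int.natCast_natAbs, Int.natCast_natAbs]
    exact hlt.elim (fun h1 => hcoord _ _ h1 hcomp.1) (fun h2 => hcoord _ _ h2 hcomp.2)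

theorem exists_natAbs_lt_apply_ofAdd_zpow_eq_zpow {v w : ℤ × ℤ} (hw : w ≠ 0)
    (hlt : |w.1| < |v.1| ∨ |w.2| < |v.2|)
    (ψ : Subgroup.zpowers (ofAdd v) ≃* Subgroup.zpowers (ofAdd w))
    (hψ : ψ ⟨ofAdd v, Subgroup.mem_zpowers _⟩ = ⟨ofAdd w, Subgroup.mem_zpowers _⟩)
    (y : ℤ) (hy : y ≠ 0) (h : ofAdd w ^ y ∈ Subgroup.zpowers (ofAdd v)) :
    ∃ z : ℤ, z ≠ 0 ∧ z.natAbs < y.natAbs ∧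
      (ψ ⟨ofAdd w ^ y, h⟩ : Multiplicative (ℤ × ℤ)) = ofAdd w ^ z := by
  obtain ⟨z, hz⟩ := Subgroup.mem_zpowers_iff.1 h
  have hyz : y • w = z • v := by
    simpa only [← ofAdd_zsmul, EmbeddingLike.apply_eq_iff_eq] using hz.symm
  obtain ⟨hz0, hzy⟩ := Prod.natAbs_lt_of_zsmul_eq_zsmul hw hlt hy hyz
  have hpow : (⟨ofAdd w ^ y, h⟩ : Subgroup.zpowers (ofAdd v)) =
      ⟨ofAdd v, Subgroup.mem_zpowers _⟩ ^ z :=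
    Subtype.ext hz.symm
  exact ⟨z, hz0, hzy, by rw [hpow, map_zpow, hψ, SubgroupClass.coe_zpow]⟩

/-- Let `m₁, n₁, m₂, n₂` be integers with `(m₁,n₁) ≠ (0,0)` and
`(m₂,n₂) ≠ (0,0)`, and `|m₁| ≠ |m₂|` or `|n₁| ≠ |n₂|`. Set `p = (m₁,n₁)`, `q = (m₂,n₂)`,
`A = ℤ·p`, `B = ℤ·q`, and let `φ : A ≃* B` with `φ p = q`. Let `G*` be the HNN extension
of `ℤ²` with respect to `(A, B, φ)`, with embedding `ι` and stable letter `t` satisfying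
`t⁻¹·ι(v)·t = ι(φ v)` for `v ∈ A` (realized as Mathlib's `HNNExtension _ B A φ.symm`).
Then for every finite set `S` of nonzero integers there exists `g ∈ G*` such that
`g·ι(x • p)·g⁻¹ ∉ ι(A)` for every `x ∈ S`. -/
theorem hnn_extension_Z2_conjugate_out_of_edge_subgroup
    (m₁ n₁ m₂ n₂ : ℤ) (hp : (m₁, n₁) ≠ (0, 0)) (hq : (m₂, n₂) ≠ (0, 0))
    (habs : |m₁| ≠ |m₂| ∨ |n₁| ≠ |n₂|)
    (A B : Subgroup (Multiplicative (ℤ × ℤ)))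
    (hA : A = Subgroup.zpowers (ofAdd (m₁, n₁)))
    (hB : B = Subgroup.zpowers (ofAdd (m₂, n₂)))
    (φ : A ≃* B)
    (hφ : ∀ a : A, (a : Multiplicative (ℤ × ℤ)) = ofAdd (m₁, n₁) →
      ((φ a : B) : Multiplicative (ℤ × ℤ)) = ofAdd (m₂, n₂))
    (S : Finset ℤ) (hS : ∀ x ∈ S, x ≠ 0) :
    ∃ g : HNNExtension (Multiplicative (ℤ × ℤ)) B A φ.symm,
      ∀ x ∈ S, g * HNNExtension.of (ofAdd (x • (m₁, n₁))) * g⁻¹ ∉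
        A.map (HNNExtension.of :
          Multiplicative (ℤ × ℤ) →* HNNExtension (Multiplicative (ℤ × ℤ)) B A φ.symm) := by
  subst hA hB
  have hφp : φ ⟨ofAdd (m₁, n₁), Subgroup.mem_zpowers _⟩ =
      ⟨ofAdd (m₂, n₂), Subgroup.mem_zpowers _⟩ :=
    Subtype.ext (hφ _ rfl)
  obtain ⟨N, hN⟩ : ∃ N : ℕ, ∀ x ∈ S, x.natAbs < N :=
    ⟨S.sup Int.natAbs + 1, fun x hx => Nat.lt_succ_of_le (Finset.le_sup hx)⟩
  simp only [ofAdd_zsmul]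
  have hdir : (|m₂| < |m₁| ∨ |n₂| < |n₁|) ∨ (|m₁| < |m₂| ∨ |n₁| < |n₂|) := by
    rcases habs with h | h <;> rcases h.lt_or_gt with h | h <;> simp [h]
  rcases hdir with hlt | hlt
  · refine ⟨t⁻¹ ^ (N + 1), fun x hx hmem => ?_⟩
    have hstep : of (ofAdd (m₂, n₂) ^ x) =
        (t : HNNExtension _ _ _ φ.symm)⁻¹ * of (ofAdd (m₁, n₁) ^ x) * t := by
      have := equiv_symm_eq_conj (φ := φ.symm)
        (⟨ofAdd (m₁, n₁), Subgroup.mem_zpowers _⟩ ^ x : Subgroup.zpowers (ofAdd (m₁, n₁)))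
      rwa [MulEquiv.symm_symm, map_zpow, hφp] at this
    have key := t_zpow_pow_conj_zpow_notMem_range φ.symm (-1) (ofAdd (m₂, n₂))
      (exists_natAbs_lt_apply_ofAdd_zpow_eq_zpow hq hlt φ hφp) N (hS x hx) (hN x hx)
    rw [Units.val_neg, Units.val_one, zpow_neg_one, hstep] at key
    refine key (Subgroup.map_le_range _ (Subgroup.zpowers (ofAdd (m₁, n₁))) ?_)
    convert hmem using 1
    group
  · refine ⟨t ^ N, fun x hx hmem => ?_⟩
    have key := t_zpow_pow_conj_zpow_notMem_range φ.symm 1 (ofAdd (m₁, n₁))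
      (exists_natAbs_lt_apply_ofAdd_zpow_eq_zpow hp hlt φ.symm (φ.symm_apply_eq.2 hφp.symm))
      N (hS x hx) (hN x hx)
    rw [Units.val_one, zpow_one] at key
    exact key (Subgroup.map_le_range _ (Subgroup.zpowers (ofAdd (m₁, n₁))) hmem)
end

section
/- Let m₁, n₁, m₂, n₂ be integers with (m₁,n₁) ≠ (0,0) and (m₂,n₂) ≠ (0,0). Suppose either (i) m₁, n₁, m₂, n₂ are all nonzero and m₁·n₂ = m₂·n₁, or (ii) m₁ = m₂ = 0, or (iii) n₁ = n₂ = 0. Write ℤ² additively, set p = (m₁,n₁) and q = (m₂,n₂), let A = ℤ·p and B = ℤ·q, let φ : A → B be a group isomorphism with φ(p) = q, and let G* be the HNN extension of ℤ² with respect to (A, B, φ), with canonical embedding ι : ℤ² → G* and stable letter t satisfying t⁻¹·ι(v)·t = ι(φ(v)) for v ∈ A. Then the subgroup ι(ℤ²) is s-normal in G*: for every w ∈ G*, the set {v ∈ ℤ² : w⁻¹·ι(v)·w ∈ ι(ℤ²)} is infinite. -/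
/-!
Let `x = ι(p)`. The cyclic subgroup `⟨x⟩` is commensurated by `ι(ℤ²)`, which centralizes it, and
by the stable letter, because `t⁻¹ x t = ι(q)` and the collinear vectors `p`, `q` have a common
nonzero multiple. Commensurators are subgroups, so every `w ∈ G*` commensurates `⟨x⟩`: the
intersection `w ⟨x⟩ w⁻¹ ⊓ ⟨x⟩` has finite index in the infinite group `⟨x⟩`, and every element
`ι(v)` of it satisfies `w⁻¹ ι(v) w ∈ ι(ℤ²)`.
-/

open Multiplicative HNNExtension Subgroup Subgroup.Commensurable Pointwise

theorem ConjAct.toConjAct_smul_zpowers {G : Type*} [Group G] (g x : G) :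
    toConjAct g • zpowers x = zpowers (g * x * g⁻¹) := by
  ext y
  simp only [mem_pointwise_smul_iff_inv_smul_mem, mem_zpowers_iff, ConjAct.smul_def, conj_zpow,
    map_inv, ConjAct.ofConjAct_toConjAct, inv_inv]
  constructor
  · rintro ⟨k, hk⟩; exact ⟨k, by rw [hk]; group⟩
  · rintro ⟨k, rfl⟩; exact ⟨k, by group⟩

namespace Subgroup

variable {G : Type*} [Group G]

theorem relIndex_zpowers_zpow_ne_zero (x : G) {a : ℤ} (ha : a ≠ 0) :
    (zpowers (x ^ a)).relIndex (zpowers x) ≠ 0 := by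
  have hmap : zpowers (x ^ a) = (zpowers (ofAdd a)).map (zpowersHom G x) := by
    rw [MonoidHom.map_zpowers, zpowersHom_apply, toAdd_ofAdd]
  have hindex : (zpowers (ofAdd a)).index = a.natAbs :=
    (AddSubgroup.zmultiples a).index_toSubgroup.trans (Int.index_zmultiples a)
  rw [hmap, ← range_zpowersHom x, ← index_comap]
  refine ne_zero_of_dvd_ne_zero ?_ (index_dvd_of_le (le_comap_map _ _))
  rw [hindex]
  exact Int.natAbs_ne_zero.2 ha

theorem commensurable_zpowers_of_zpow_eq {x y : G} {a b : ℤ} (ha : a ≠ 0) (hb : b ≠ 0)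
    (h : x ^ a = y ^ b) : Commensurable (zpowers x) (zpowers y) := by
  have hy : zpowers (y ^ b) ≤ zpowers x := zpowers_le.2 (h ▸ zpow_mem (mem_zpowers x) a)
  have hx : zpowers (x ^ a) ≤ zpowers y := zpowers_le.2 (h ▸ zpow_mem (mem_zpowers y) b)
  exact ⟨fun h0 => relIndex_zpowers_zpow_ne_zero y hb (relIndex_eq_zero_of_le_left hy h0),
    fun h0 => relIndex_zpowers_zpow_ne_zero x ha (relIndex_eq_zero_of_le_left hx h0)⟩

theorem mem_commensurator_zpowers_of_zpow_eq {g x : G} {a b : ℤ} (ha : a ≠ 0) (hb : b ≠ 0)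
    (h : (g * x * g⁻¹) ^ a = x ^ b) : g ∈ commensurator (zpowers x) := by
  rw [commensurator_mem_iff, ConjAct.toConjAct_smul_zpowers]
  exact commensurable_zpowers_of_zpow_eq ha hb h

theorem infinite_inf_of_relIndex_ne_zero {H K : Subgroup G} (hK : (K : Set G).Infinite)
    (h : H.relIndex K ≠ 0) : ((H ⊓ K : Subgroup G) : Set G).Infinite := by
  intro hfin
  have hcard := relIndex_mul_relIndex ⊥ (H ⊓ K) K bot_le inf_le_right
  rw [relIndex_bot_left, relIndex_bot_left, inf_relIndex_right] at hcard
  have : Finite (H ⊓ K : Subgroup G) := hfin.to_subtype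
  exact hK (Set.finite_coe_iff.mp
    (Nat.finite_of_card_ne_zero (hcard ▸ mul_ne_zero Nat.card_pos.ne' h)))

theorem infinite_setOf_conj_mem_range_of_mem_commensurator {H : Type*} [Group H] (f : H →* G)
    {K : Subgroup G} (hKf : K ≤ f.range) (hK : (K : Set G).Infinite) {w : G}
    (hw : w ∈ commensurator K) : {v : H | w⁻¹ * f v * w ∈ f.range}.Infinite := by
  refine Set.Infinite.of_image f
    ((infinite_inf_of_relIndex_ne_zero hK ((commensurator_mem_iff K w).1 hw).1).mono ?_)
  rintro y ⟨hyw : y ∈ ConjAct.toConjAct w • K, hy : y ∈ K⟩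
  obtain ⟨v, rfl⟩ := hKf hy
  refine ⟨v, hKf ?_, rfl⟩
  rw [mem_pointwise_smul_iff_inv_smul_mem] at hyw
  simpa [ConjAct.smul_def] using hyw

end Subgroup

namespace HNNExtension

variable {G : Type*} [CommGroup G] {A B : Subgroup G} {φ : A ≃* B}

theorem of_mem_commensurator_zpowers_of (g h : G) :
    (of h : HNNExtension G A B φ) ∈ commensurator (zpowers (of g)) :=
  mem_commensurator_zpowers_of_zpow_eq one_ne_zero one_ne_zero <| by
    rw [← map_inv, ← map_mul, ← map_mul, mul_inv_cancel_comm]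

theorem commensurator_zpowers_of_eq_top {g : G} (hg : g ∈ B) {a b : ℤ} (ha : a ≠ 0)
    (hb : b ≠ 0) (h : (φ.symm ⟨g, hg⟩ : G) ^ a = g ^ b) :
    commensurator (zpowers (of g : HNNExtension G A B φ)) = ⊤ := by
  have ht : (t : HNNExtension G A B φ)⁻¹ ∈ commensurator (zpowers (of g)) :=
    mem_commensurator_zpowers_of_zpow_eq ha hb <| by
      rw [inv_inv, ← equiv_symm_eq_conj ⟨g, hg⟩, ← map_zpow, ← map_zpow, h]
  exact eq_top_iff.2 fun w _ => induction_on w (of_mem_commensurator_zpowers_of g)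
    (by simpa using inv_mem ht) (fun _ _ => mul_mem) (fun _ => inv_mem)

end HNNExtension

theorem exists_zsmul_eq_zsmul_of_mul_eq_mul {m₁ n₁ m₂ n₂ : ℤ} (hp : (m₁, n₁) ≠ (0, 0))
    (hq : (m₂, n₂) ≠ (0, 0)) (h : m₁ * n₂ = m₂ * n₁) :
    ∃ a b : ℤ, a ≠ 0 ∧ b ≠ 0 ∧ a • (m₁, n₁) = b • (m₂, n₂) := by
  by_cases hm₁ : m₁ = 0
  · have hn₁ : n₁ ≠ 0 := by rintro rfl; exact hp (by rw [hm₁])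
    have hm₂ : m₂ = 0 := by simpa [hm₁, hn₁] using h
    have hn₂ : n₂ ≠ 0 := by rintro rfl; exact hq (by rw [hm₂])
    exact ⟨n₂, n₁, hn₂, hn₁, by simp [hm₁, hm₂, mul_comm]⟩
  · have hm₂ : m₂ ≠ 0 := by
      rintro rfl
      have hn₂ : n₂ = 0 := by simpa [hm₁] using h
      exact hq (by rw [hn₂])
    exact ⟨m₂, m₁, hm₂, hm₁, by simp [mul_comm, h]⟩

theorem hnn_extension_Z2_base_s_normal_general
    (m₁ n₁ m₂ n₂ : ℤ) (hp : (m₁, n₁) ≠ (0, 0)) (hq : (m₂, n₂) ≠ (0, 0))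
    (hcase : (m₁ ≠ 0 ∧ n₁ ≠ 0 ∧ m₂ ≠ 0 ∧ n₂ ≠ 0 ∧ m₁ * n₂ = m₂ * n₁) ∨
      (m₁ = 0 ∧ m₂ = 0) ∨ (n₁ = 0 ∧ n₂ = 0))
    (A B : Subgroup (Multiplicative (ℤ × ℤ)))
    (hA : A = Subgroup.zpowers (ofAdd (m₁, n₁)))
    (φ : A ≃* B)
    (hφ : ∀ a : A, (a : Multiplicative (ℤ × ℤ)) = ofAdd (m₁, n₁) →
      ((φ a : B) : Multiplicative (ℤ × ℤ)) = ofAdd (m₂, n₂)) :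
    ∀ w : HNNExtension (Multiplicative (ℤ × ℤ)) B A φ.symm,
      {v : ℤ × ℤ | w⁻¹ * HNNExtension.of (ofAdd v) * w ∈
        (HNNExtension.of :
          Multiplicative (ℤ × ℤ) →* HNNExtension (Multiplicative (ℤ × ℤ)) B A φ.symm).range
        }.Infinite := by
  have hcross : m₂ * n₁ = m₁ * n₂ := by
    rcases hcase with ⟨-, -, -, -, h⟩ | ⟨rfl, rfl⟩ | ⟨rfl, rfl⟩
    exacts [h.symm, by ring, by ring]
  obtain ⟨a, b, ha, hb, hab⟩ := exists_zsmul_eq_zsmul_of_mul_eq_mul hq hp hcross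
  have hpA : ofAdd (m₁, n₁) ∈ A := hA ▸ mem_zpowers _
  have hcomm := commensurator_zpowers_of_eq_top (φ := φ.symm) hpA ha hb <| by
    rw [MulEquiv.symm_symm, hφ _ rfl, ← ofAdd_zsmul, ← ofAdd_zsmul, hab]
  intro w
  refine (infinite_setOf_conj_mem_range_of_mem_commensurator of (zpowers_le.2 ⟨_, rfl⟩) ?_
    (hcomm ▸ mem_top w)).preimage (ofAdd.surjective.range_eq ▸ Set.subset_univ _)
  rw [infinite_zpowers, (of_injective φ.symm).isOfFinOrder_iff]
  exact not_isOfFinOrder_of_isMulTorsionFree (by simpa using hp)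

/-- With `p = (m₁,n₁) ≠ 0`, `q = (m₂,n₂) ≠ 0`, assume either all of
`m₁, n₁, m₂, n₂` are nonzero and `m₁·n₂ = m₂·n₁`, or `m₁ = m₂ = 0`, or `n₁ = n₂ = 0`.
Let `A = ℤ·p`, `B = ℤ·q`, `φ : A ≃* B` with `φ p = q`, and `G*` the HNN extension of `ℤ²`
with respect to `(A, B, φ)` (stable letter satisfying `t⁻¹·ι(v)·t = ι(φ v)` for `v ∈ A`,
realized as Mathlib's `HNNExtension _ B A φ.symm`). Then `ι(ℤ²)` is s-normal in `G*`:
for every `w ∈ G*` the set `{v ∈ ℤ² : w⁻¹·ι(v)·w ∈ ι(ℤ²)}` is infinite. -/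
theorem hnn_extension_Z2_base_s_normal
    (m₁ n₁ m₂ n₂ : ℤ) (hp : (m₁, n₁) ≠ (0, 0)) (hq : (m₂, n₂) ≠ (0, 0))
    (hcase : (m₁ ≠ 0 ∧ n₁ ≠ 0 ∧ m₂ ≠ 0 ∧ n₂ ≠ 0 ∧ m₁ * n₂ = m₂ * n₁) ∨
      (m₁ = 0 ∧ m₂ = 0) ∨ (n₁ = 0 ∧ n₂ = 0))
    (A B : Subgroup (Multiplicative (ℤ × ℤ)))
    (hA : A = Subgroup.zpowers (ofAdd (m₁, n₁)))
    (hB : B = Subgroup.zpowers (ofAdd (m₂, n₂)))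
    (φ : A ≃* B)
    (hφ : ∀ a : A, (a : Multiplicative (ℤ × ℤ)) = ofAdd (m₁, n₁) →
      ((φ a : B) : Multiplicative (ℤ × ℤ)) = ofAdd (m₂, n₂)) :
    ∀ w : HNNExtension (Multiplicative (ℤ × ℤ)) B A φ.symm,
      {v : ℤ × ℤ | w⁻¹ * HNNExtension.of (ofAdd v) * w ∈
        (HNNExtension.of :
          Multiplicative (ℤ × ℤ) →* HNNExtension (Multiplicative (ℤ × ℤ)) B A φ.symm).range
        }.Infinite :=
  hnn_extension_Z2_base_s_normal_general m₁ n₁ m₂ n₂ hp hq hcase A B hA φ hφ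
end

section
/- Let n ≥ 1 and let Aₑ and A_f be n×n integer matrices with nonzero determinant. Let A = Aₑ·ℤⁿ and B = A_f·ℤⁿ be the subgroups of ℤⁿ (written additively) given by their images under matrix-vector multiplication, and let φ : A → B be the group isomorphism with φ(Aₑ·x) = A_f·x for all x ∈ ℤⁿ. Let G* be the HNN extension of ℤⁿ with respect to (A, B, φ), with canonical embedding ι : ℤⁿ → G* and stable letter t satisfying t⁻¹·ι(v)·t = ι(φ(v)) for all v ∈ A. Let M = Aₑ⁻¹·A_f, a matrix over ℚ. Suppose that for every finite set F of nonzero vectors of ℤⁿ there exists an integer m ≥ 1 such that for every x ∈ F the rational vector M^m·x has at least one coordinate that is not an integer. Then for every finite set S of nonzero vectors of ℤⁿ there exists g ∈ G* such that g·ι(Aₑ·x)·g⁻¹ ∉ ι(A) for all x ∈ S. -/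
/-! Conjugation by `t⁻¹` sends `ι(Aₑx)` to `ι(A_f x) = ι(Aₑ(Mx))`, so `t⁻ʲ ι(Aₑx) tʲ` stays of
the form `ι(Aₑ(Mʲx))` while the iterates `Mʲx` are integral. At the first `j` with `Mʲx`
non-integral it equals `ι(w)` with `w ∉ A`, and Britton's lemma shows that no further
conjugation by a power of `t⁻¹` brings `ι(w)` back into `ι(A)`. Hence `g = t⁻ᵐ`, with `m` given
by the hypothesis for `F = S`, works for every `x ∈ S`. -/

open Multiplicative HNNExtension

namespace HNNExtension

variable {G : Type*} [Group G] {A B : Subgroup G} {φ : A ≃* B}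

theorem conj_inv_t_pow_succ_of_notMem_range {w : G} (hw : w ∉ B) (r : ℕ) :
    MulAut.conj ((t⁻¹ : HNNExtension G A B φ) ^ (r + 1)) (of w) ∉ of.range := by
  let word : NormalWord.ReducedWord G A B :=
    { head := 1
      toList := .replicate r (-1, 1) ++ (-1, w) :: .replicate (r + 1) (1, 1)
      chain := by
        -- the only place where the word could pinch is `t⁻¹ w t`, and `w ∉ B`
        refine List.isChain_append.2 ⟨List.isChain_replicate_of_rel _ fun _ => rfl,
          List.isChain_cons.2 ⟨fun _ _ hwB => absurd hwB hw,
            List.isChain_replicate_of_rel _ fun _ => rfl⟩, ?_⟩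
        simp +contextual [List.getLast?_replicate] }
  have hprod : word.prod φ = MulAut.conj ((t⁻¹ : HNNExtension G A B φ) ^ (r + 1)) (of w) := by
    rw [MulAut.conj_apply, inv_pow, inv_inv]
    simp [word, NormalWord.ReducedWord.prod, pow_succ, mul_assoc]
    group
  intro hmem
  simpa [word] using ReducedWord.toList_eq_nil_of_mem_of_range φ word (hprod ▸ hmem)

theorem conj_inv_t_pow_of_notMem_map {w : G} (hw : w ∉ B) :
    ∀ r : ℕ, MulAut.conj ((t⁻¹ : HNNExtension G A B φ) ^ r) (of w) ∉ B.map of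
  | 0 => by simpa [Subgroup.mem_map_iff_mem (of_injective φ)] using hw
  | r + 1 => fun hmem => conj_inv_t_pow_succ_of_notMem_range hw r (Subgroup.map_le_range of _ hmem)

end HNNExtension

namespace Matrix

variable {m n : Type*} [Fintype n]

theorem map_intCast_mulVec {R : Type*} [NonAssocRing R] (C : Matrix m n ℤ) (v : n → ℤ) :
    C.map (Int.cast : ℤ → R) *ᵥ (fun i => (v i : R)) = fun i => ((C *ᵥ v) i : R) :=
  funext fun i => (RingHom.map_mulVec (Int.castRingHom R) C v i).symm

theorem inv_mulVec_eq_iff_eq_mulVec [DecidableEq n] {R : Type*} [CommRing R] {C : Matrix n n R}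
    (hC : IsUnit C.det) {u w : n → R} :
    C⁻¹ *ᵥ u = w ↔ u = C *ᵥ w := by
  constructor
  · rintro rfl
    rw [mulVec_mulVec, mul_nonsing_inv C hC, one_mulVec]
  · rintro rfl
    rw [mulVec_mulVec, nonsing_inv_mul C hC, one_mulVec]

theorem inv_map_intCast_mul_map_intCast_mulVec_eq_iff [DecidableEq n] {K : Type*} [Field K]
    [CharZero K] {C D : Matrix n n ℤ} (hC : C.det ≠ 0) (v y : n → ℤ) :
    ((C.map (Int.cast : ℤ → K))⁻¹ * D.map Int.cast) *ᵥ (fun i => (v i : K)) =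
        (fun i => (y i : K)) ↔ D *ᵥ v = C *ᵥ y := by
  have hCK : IsUnit (C.map (Int.cast : ℤ → K)).det := by
    rw [← Int.cast_det, isUnit_iff_ne_zero]
    exact_mod_cast hC
  rw [← mulVec_mulVec, inv_mulVec_eq_iff_eq_mulVec hCK, map_intCast_mulVec, map_intCast_mulVec]
  simp [funext_iff]

end Matrix

section IntegerMatrixHNN

open Matrix

variable {n K : Type*} [Fintype n] [Field K] [CharZero K] {Ae Af : Matrix n n ℤ}
  {A B : Subgroup (Multiplicative (n → ℤ))} {φ : A ≃* B}

theorem conj_inv_t_of_ofAdd_mulVec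
    (hA : ∀ v : Multiplicative (n → ℤ), v ∈ A ↔ ∃ x : n → ℤ, v = ofAdd (Ae *ᵥ x))
    (hφ : ∀ (a : A) (x : n → ℤ), (a : Multiplicative (n → ℤ)) = ofAdd (Ae *ᵥ x) →
      ((φ a : B) : Multiplicative (n → ℤ)) = ofAdd (Af *ᵥ x))
    (x : n → ℤ) :
    MulAut.conj (t⁻¹ : HNNExtension _ B A φ.symm) (of (ofAdd (Ae *ᵥ x))) =
      of (ofAdd (Af *ᵥ x)) := by
  have hx : ofAdd (Ae *ᵥ x) ∈ A := (hA _).2 ⟨x, rfl⟩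
  rw [MulAut.conj_apply, inv_inv, ← hφ ⟨_, hx⟩ x rfl]
  exact (equiv_symm_eq_conj (φ := φ.symm) ⟨_, hx⟩).symm

theorem ofAdd_mulVec_notMem_of_exists_not_intCast [DecidableEq n] (hAe : Ae.det ≠ 0)
    (hA : ∀ v : Multiplicative (n → ℤ), v ∈ A ↔ ∃ x : n → ℤ, v = ofAdd (Ae *ᵥ x))
    {x : n → ℤ} (hx : ∃ i, (((Ae.map (Int.cast : ℤ → K))⁻¹ * Af.map Int.cast) *ᵥ
      fun j => (x j : K)) i ∉ Set.range (Int.cast : ℤ → K)) :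
    ofAdd (Af *ᵥ x) ∉ A := by
  rintro hmem
  obtain ⟨y, hy⟩ := (hA _).1 hmem
  obtain ⟨i, hi⟩ := hx
  rw [(inv_map_intCast_mul_map_intCast_mulVec_eq_iff hAe x y).2 (ofAdd.injective hy)] at hi
  exact hi ⟨y i, rfl⟩

theorem conj_inv_t_pow_of_ofAdd_mulVec_notMem_map [DecidableEq n] (hAe : Ae.det ≠ 0)
    (hA : ∀ v : Multiplicative (n → ℤ), v ∈ A ↔ ∃ x : n → ℤ, v = ofAdd (Ae *ᵥ x))
    (hφ : ∀ (a : A) (x : n → ℤ), (a : Multiplicative (n → ℤ)) = ofAdd (Ae *ᵥ x) →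
      ((φ a : B) : Multiplicative (n → ℤ)) = ofAdd (Af *ᵥ x)) :
    ∀ (j : ℕ) (x : n → ℤ), (∃ i, ((((Ae.map (Int.cast : ℤ → K))⁻¹ * Af.map Int.cast) ^ j) *ᵥ
      fun k => (x k : K)) i ∉ Set.range (Int.cast : ℤ → K)) →
      MulAut.conj ((t⁻¹ : HNNExtension _ B A φ.symm) ^ j) (of (ofAdd (Ae *ᵥ x))) ∉ A.map of
  | 0, x, ⟨i, hi⟩ => absurd ⟨x i, by simp⟩ hi
  | j + 1, x, hx => by
    rw [pow_succ, map_mul, MulAut.mul_apply, conj_inv_t_of_ofAdd_mulVec hA hφ]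
    by_cases hint : ∀ i, (((Ae.map (Int.cast : ℤ → K))⁻¹ * Af.map Int.cast) *ᵥ
        fun k => (x k : K)) i ∈ Set.range (Int.cast : ℤ → K)
    · choose y hy using hint
      rw [(inv_map_intCast_mul_map_intCast_mulVec_eq_iff hAe x y).1 (funext hy).symm]
      refine conj_inv_t_pow_of_ofAdd_mulVec_notMem_map hAe hA hφ j y ?_
      rwa [funext hy, mulVec_mulVec, ← pow_succ]
    · exact conj_inv_t_pow_of_notMem_map
        (ofAdd_mulVec_notMem_of_exists_not_intCast hAe hA (not_forall.1 hint)) j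

end IntegerMatrixHNN

theorem hnn_extension_Zn_conjugate_out_of_edge_subgroup_general
    (n : ℕ)
    (Ae Af : Matrix (Fin n) (Fin n) ℤ) (hAe : Ae.det ≠ 0)
    (A B : Subgroup (Multiplicative (Fin n → ℤ)))
    (hA : ∀ v : Multiplicative (Fin n → ℤ), v ∈ A ↔ ∃ x : Fin n → ℤ, v = ofAdd (Ae.mulVec x))
    (φ : A ≃* B)
    (hφ : ∀ (a : A) (x : Fin n → ℤ), (a : Multiplicative (Fin n → ℤ)) = ofAdd (Ae.mulVec x) →
      ((φ a : B) : Multiplicative (Fin n → ℤ)) = ofAdd (Af.mulVec x))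
    (hM : ∀ F : Finset (Fin n → ℤ), (∀ x ∈ F, x ≠ 0) →
      ∃ m : ℕ, 1 ≤ m ∧ ∀ x ∈ F, ∃ i : Fin n,
        (((Ae.map (Int.cast : ℤ → ℚ))⁻¹ * Af.map (Int.cast : ℤ → ℚ)) ^ m).mulVec
            (fun j => (x j : ℚ)) i ∉ Set.range (Int.cast : ℤ → ℚ))
    (S : Finset (Fin n → ℤ)) (hS : ∀ x ∈ S, x ≠ 0) :
    ∃ g : HNNExtension (Multiplicative (Fin n → ℤ)) B A φ.symm,
      ∀ x ∈ S, g * HNNExtension.of (ofAdd (Ae.mulVec x)) * g⁻¹ ∉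
        A.map (HNNExtension.of : Multiplicative (Fin n → ℤ) →*
          HNNExtension (Multiplicative (Fin n → ℤ)) B A φ.symm) := by
  obtain ⟨m, -, hm⟩ := hM S hS
  refine ⟨t⁻¹ ^ m, fun x hx => ?_⟩
  rw [← MulAut.conj_apply]
  exact conj_inv_t_pow_of_ofAdd_mulVec_notMem_map hAe hA hφ m x (hm x hx)

/-- Let `n ≥ 1` and `Aₑ, A_f` be `n×n` integer matrices with nonzero
determinant, `A = Aₑ·ℤⁿ`, `B = A_f·ℤⁿ`, `φ : A ≃* B` with `φ (Aₑ·x) = A_f·x`, and let `G*` be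
the HNN extension of `ℤⁿ` with respect to `(A, B, φ)` (stable letter satisfying
`t⁻¹·ι(v)·t = ι(φ v)` for `v ∈ A`, realized as Mathlib's `HNNExtension _ B A φ.symm`).
Set `M = Aₑ⁻¹·A_f` over `ℚ`. If for every finite set `F` of nonzero vectors of `ℤⁿ` there is
`m ≥ 1` such that for all `x ∈ F` the vector `M^m·x` has a non-integer coordinate, then for
every finite set `S` of nonzero vectors of `ℤⁿ` there exists `g ∈ G*` with
`g·ι(Aₑ·x)·g⁻¹ ∉ ι(A)` for all `x ∈ S`. -/
theorem hnn_extension_Zn_conjugate_out_of_edge_subgroup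
    (n : ℕ) (hn : 1 ≤ n)
    (Ae Af : Matrix (Fin n) (Fin n) ℤ) (hAe : Ae.det ≠ 0) (hAf : Af.det ≠ 0)
    (A B : Subgroup (Multiplicative (Fin n → ℤ)))
    (hA : ∀ v : Multiplicative (Fin n → ℤ), v ∈ A ↔ ∃ x : Fin n → ℤ, v = ofAdd (Ae.mulVec x))
    (hB : ∀ v : Multiplicative (Fin n → ℤ), v ∈ B ↔ ∃ x : Fin n → ℤ, v = ofAdd (Af.mulVec x))
    (φ : A ≃* B)
    (hφ : ∀ (a : A) (x : Fin n → ℤ), (a : Multiplicative (Fin n → ℤ)) = ofAdd (Ae.mulVec x) →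
      ((φ a : B) : Multiplicative (Fin n → ℤ)) = ofAdd (Af.mulVec x))
    (hM : ∀ F : Finset (Fin n → ℤ), (∀ x ∈ F, x ≠ 0) →
      ∃ m : ℕ, 1 ≤ m ∧ ∀ x ∈ F, ∃ i : Fin n,
        (((Ae.map (Int.cast : ℤ → ℚ))⁻¹ * Af.map (Int.cast : ℤ → ℚ)) ^ m).mulVec
            (fun j => (x j : ℚ)) i ∉ Set.range (Int.cast : ℤ → ℚ))
    (S : Finset (Fin n → ℤ)) (hS : ∀ x ∈ S, x ≠ 0) :
    ∃ g : HNNExtension (Multiplicative (Fin n → ℤ)) B A φ.symm,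
      ∀ x ∈ S, g * HNNExtension.of (ofAdd (Ae.mulVec x)) * g⁻¹ ∉
        A.map (HNNExtension.of : Multiplicative (Fin n → ℤ) →*
          HNNExtension (Multiplicative (Fin n → ℤ)) B A φ.symm) :=
  hnn_extension_Zn_conjugate_out_of_edge_subgroup_general n Ae Af hAe A B hA φ hφ hM S hS
end

section
/- Let θ be a real number such that θ/π is irrational. Then for every finite set F of pairs of integers (y, z) with (y, z) ≠ (0, 0), there exists an integer m ≥ 1 such that for every (y, z) ∈ F it is not the case that both y·cos(mθ) + z·sin(mθ) and −y·sin(mθ) + z·cos(mθ) are integers; equivalently, the vector R^m·(y, z) does not lie in ℤ², where R is the rotation matrix with rows (cos θ, sin θ) and (−sin θ, cos θ). -/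
/-!
Identify `(y, z)` with `w = y + z i`; then `R^m (y, z)` is `w e^{-imθ}`. All these points lie on
the circle of radius `|w|`, which contains only finitely many lattice points, while the points
themselves are pairwise distinct because `θ/π` is irrational. So for each `w ≠ 0` only finitely
many `m` send `w` into the lattice, and any `m` beyond all of them works for the whole of `F`.
-/

open Complex Set

def gaussianLattice : Set ℂ :=
  {z | z.re ∈ range (Int.cast : ℤ → ℝ) ∧ z.im ∈ range (Int.cast : ℤ → ℝ)}

lemma mem_gaussianLattice {z : ℂ} :
    z ∈ gaussianLattice ↔ z.re ∈ range (Int.cast : ℤ → ℝ) ∧ z.im ∈ range (Int.cast : ℤ → ℝ) :=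
  Iff.rfl

lemma Int.mem_Icc_neg_ceil_of_abs_le {a : ℤ} {r : ℝ} (h : |(a : ℝ)| ≤ r) :
    a ∈ Finset.Icc (-⌈r⌉) ⌈r⌉ := by
  rw [abs_le] at h
  rw [Finset.mem_Icc, neg_le, Int.le_ceil_iff, Int.le_ceil_iff]
  push_cast
  constructor <;> linarith

lemma finite_gaussianLattice_inter_closedBall (r : ℝ) :
    (gaussianLattice ∩ Metric.closedBall 0 r).Finite := by
  let box := Finset.Icc (-⌈r⌉) ⌈r⌉ ×ˢ Finset.Icc (-⌈r⌉) ⌈r⌉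
  refine (box.finite_toSet.image fun q : ℤ × ℤ => (q.1 + q.2 * I : ℂ)).subset ?_
  rintro z ⟨⟨⟨a, ha⟩, ⟨b, hb⟩⟩, hz⟩
  have hzr : ‖z‖ ≤ r := mem_closedBall_zero_iff.1 hz
  refine ⟨(a, b), Finset.mem_product.2 ⟨?_, ?_⟩, ?_⟩
  · exact Int.mem_Icc_neg_ceil_of_abs_le (ha ▸ (abs_re_le_norm z).trans hzr)
  · exact Int.mem_Icc_neg_ceil_of_abs_le (hb ▸ (abs_im_le_norm z).trans hzr)
  · apply Complex.ext <;> simp [ha, hb]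

lemma re_mul_circleExp_neg (w : ℂ) (φ : ℝ) :
    (w * Circle.exp (-φ)).re = w.re * Real.cos φ + w.im * Real.sin φ := by
  rw [Circle.coe_exp, mul_re, exp_ofReal_mul_I_re, exp_ofReal_mul_I_im, Real.cos_neg, Real.sin_neg]
  ring

lemma im_mul_circleExp_neg (w : ℂ) (φ : ℝ) :
    (w * Circle.exp (-φ)).im = -w.re * Real.sin φ + w.im * Real.cos φ := by
  rw [Circle.coe_exp, mul_im, exp_ofReal_mul_I_re, exp_ofReal_mul_I_im, Real.cos_neg, Real.sin_neg]
  ring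

lemma circleExp_neg_nat_mul_injective {θ : ℝ} (hθ : Irrational (θ / Real.pi)) :
    Function.Injective fun m : ℕ => Circle.exp (-(m * θ)) := by
  intro m₁ m₂ h
  obtain ⟨n, hn⟩ := Circle.exp_eq_exp.1 h
  by_contra hne
  have hsub : (m₂ : ℝ) - m₁ ≠ 0 := sub_ne_zero.2 (by exact_mod_cast Ne.symm hne)
  refine hθ ⟨2 * n / ((m₂ : ℤ) - m₁ : ℤ), ?_⟩
  push_cast
  field_simp
  linarith

lemma finite_setOf_mul_circleExp_mem_gaussianLattice {θ : ℝ} (hθ : Irrational (θ / Real.pi))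
    {w : ℂ} (hw : w ≠ 0) :
    {m : ℕ | w * Circle.exp (-(m * θ)) ∈ gaussianLattice}.Finite := by
  refine Set.Finite.of_finite_image (f := fun m : ℕ => w * Circle.exp (-(m * θ)))
    ((finite_gaussianLattice_inter_closedBall ‖w‖).subset ?_) ?_
  · rintro _ ⟨m, hm, rfl⟩
    exact ⟨hm, by simp⟩
  · exact ((mul_right_injective₀ hw).comp
      (Subtype.val_injective.comp (circleExp_neg_nat_mul_injective hθ))).injOn

lemma exists_mul_circleExp_notMem_gaussianLattice {ι : Type*} {θ : ℝ}
    (hθ : Irrational (θ / Real.pi)) (F : Finset ι) (w : ι → ℂ) (hw : ∀ i ∈ F, w i ≠ 0) :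
    ∃ m : ℕ, 1 ≤ m ∧ ∀ i ∈ F, w i * Circle.exp (-(m * θ)) ∉ gaussianLattice := by
  obtain ⟨N, hN⟩ := (F.finite_toSet.biUnion fun i hi =>
    finite_setOf_mul_circleExp_mem_gaussianLattice hθ (hw i hi)).bddAbove
  refine ⟨N + 1, by omega, fun i hi hmem => ?_⟩
  have := hN (mem_biUnion hi hmem)
  omega

/-- Let `θ` be a real number with `θ/π` irrational. Then for every finite
set `F` of pairs of integers `(y, z) ≠ (0, 0)` there exists `m ≥ 1` such that for every
`(y, z) ∈ F` it is not the case that both `y·cos(mθ) + z·sin(mθ)` and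
`−y·sin(mθ) + z·cos(mθ)` are integers. -/
theorem rotation_escapes_integer_lattice
    (θ : ℝ) (hθ : Irrational (θ / Real.pi))
    (F : Finset (ℤ × ℤ)) (hF : ∀ p ∈ F, p ≠ (0, 0)) :
    ∃ m : ℕ, 1 ≤ m ∧ ∀ p ∈ F,
      ¬ (((p.1 : ℝ) * Real.cos (m * θ) + (p.2 : ℝ) * Real.sin (m * θ) ∈
            Set.range (Int.cast : ℤ → ℝ)) ∧
        (-(p.1 : ℝ) * Real.sin (m * θ) + (p.2 : ℝ) * Real.cos (m * θ) ∈
            Set.range (Int.cast : ℤ → ℝ))) := by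
  have hw : ∀ p ∈ F, (p.1 + p.2 * I : ℂ) ≠ 0 := fun p hp h =>
    hF p hp (Prod.ext (by simpa using congrArg re h) (by simpa using congrArg im h))
  obtain ⟨m, hm, hmF⟩ := exists_mul_circleExp_notMem_gaussianLattice hθ F _ hw
  refine ⟨m, hm, fun p hp => ?_⟩
  have hre : (p.1 + p.2 * I : ℂ).re = p.1 := by simp
  have him : (p.1 + p.2 * I : ℂ).im = p.2 := by simp
  simpa only [mem_gaussianLattice, re_mul_circleExp_neg, im_mul_circleExp_neg, hre, him]
    using hmF p hp
end

section
/- Let M be the 2×2 rational matrix with rows (3/5, −4/5) and (4/5, 3/5). Then for every finite set F of nonzero vectors of ℤ² there exists an integer m ≥ 1 such that for every x ∈ F, the rational vector M^m·x has at least one coordinate that is not an integer. -/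
/-!
Identify `ℤ²` with the Gaussian integers. Then `5 • M` acts as multiplication by
`3 + 4i = (2 + i)²`, and `5 = (2 - i)(2 + i)`. If `M^m x` is integral, `5^m` divides
`(2 + i)^(2m) z`; since the Gaussian prime `2 - i` does not divide `2 + i`, `(2 - i)^m` divides
`z`, so `5^m` divides the norm of `z`. That norm is positive, so this fails once `5^m` exceeds
the norms of all elements of `F`.
-/

open Matrix Filter

namespace Zsqrtd

variable {d : ℤ}

def toVec (z : ℤ√d) : Fin 2 → ℤ := ![z.re, z.im]

def mulMatrix (z : ℤ√d) : Matrix (Fin 2) (Fin 2) ℤ := !![z.re, d * z.im; z.im, z.re]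

theorem mulMatrix_mulVec_toVec (z w : ℤ√d) : mulMatrix z *ᵥ toVec w = toVec (z * w) := by
  ext i; fin_cases i <;> simp [mulMatrix, toVec] <;> ring

theorem mulMatrix_pow_mulVec_toVec (z w : ℤ√d) (m : ℕ) :
    mulMatrix z ^ m *ᵥ toVec w = toVec (z ^ m * w) := by
  induction m with
  | zero => simp
  | succ m ih =>
    rw [pow_succ', ← mulVec_mulVec, ih, mulMatrix_mulVec_toVec, pow_succ', mul_assoc]

theorem irreducible_of_natAbs_norm_prime {z : ℤ√d} (h : z.norm.natAbs.Prime) :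
    Irreducible z := by
  refine ⟨fun hz => h.ne_one (norm_eq_one_iff.mpr hz), fun a b hab => ?_⟩
  have hnorm : a.norm.natAbs * b.norm.natAbs = z.norm.natAbs := by
    rw [← Int.natAbs_mul, ← norm_mul, hab]
  rcases (Nat.prime_mul_iff.mp (hnorm ▸ h)) with ⟨-, hb⟩ | ⟨-, ha⟩
  · exact .inr (norm_eq_one_iff.mp hb)
  · exact .inl (norm_eq_one_iff.mp ha)

end Zsqrtd

namespace GaussianInt

open Zsqrtd

theorem norm_pow_dvd_norm_of_dvd_star_pow_mul {π z : GaussianInt} (hπ : Prime π)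
    (hπ' : ¬π ∣ star π) {m k : ℕ} (h : (π.norm : GaussianInt) ^ m ∣ star π ^ k * z) :
    π.norm ^ m ∣ z.norm := by
  have hπz : π ^ m ∣ z :=
    hπ.pow_dvd_of_dvd_mul_left m (fun hk => hπ' (hπ.dvd_of_dvd_pow hk))
      ((pow_dvd_pow_of_dvd (Dvd.intro _ (norm_eq_mul_conj π).symm) m).trans h)
  have := map_dvd normMonoidHom hπz
  rwa [map_pow] at this

theorem prime_two_sub_i : Prime (⟨2, -1⟩ : GaussianInt) :=
  (irreducible_of_natAbs_norm_prime (by norm_num [Zsqrtd.norm_def])).prime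

theorem two_sub_i_not_dvd_star : ¬(⟨2, -1⟩ : GaussianInt) ∣ star ⟨2, -1⟩ := by
  rintro ⟨c, hc⟩
  have hre := congrArg Zsqrtd.re hc
  have him := congrArg Zsqrtd.im hc
  simp only [re_star, im_star, re_mul, im_mul] at hre him
  -- `2 * c.re + c.im = 2` and `2 * c.im - c.re = 1` force `5 * c.im = 4`
  omega

end GaussianInt

open Zsqrtd GaussianInt

theorem Matrix.smul_map_intCast_pow_mulVec {n K : Type*} [Fintype n] [DecidableEq n] [CommRing K]
    (c : K) (A : Matrix n n ℤ) (m : ℕ) (x : n → ℤ) :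
    (c • A.map (Int.cast : ℤ → K)) ^ m *ᵥ (fun j => (x j : K)) =
      c ^ m • fun i => ((A ^ m *ᵥ x) i : K) := by
  have hmap : A.map (Int.cast : ℤ → K) ^ m = (A ^ m).map Int.cast :=
    (map_pow (Int.castRingHom K).mapMatrix A m).symm
  ext i
  rw [smul_pow, smul_mulVec, hmap, Pi.smul_apply, Pi.smul_apply]
  exact congrArg _ ((Int.castRingHom K).map_mulVec (A ^ m) x i).symm

theorem Int.dvd_of_inv_mul_mem_range_intCast {K : Type*} [Field K] [CharZero K] {n a : ℤ}
    (hn : n ≠ 0) (h : (n : K)⁻¹ * a ∈ Set.range (Int.cast : ℤ → K)) : n ∣ a := by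
  obtain ⟨k, hk⟩ := h
  refine ⟨k, ?_⟩
  have hn' : (n : K) ≠ 0 := Int.cast_ne_zero.mpr hn
  rw [eq_inv_mul_iff_mul_eq₀ hn'] at hk
  exact_mod_cast hk.symm

theorem learyMinasyan_matrix_eq :
    !![(3 : ℚ)/5, -4/5; 4/5, 3/5] =
      (5 : ℚ)⁻¹ • (mulMatrix (⟨3, 4⟩ : GaussianInt)).map Int.cast := by
  ext i j; fin_cases i <;> fin_cases j <;> norm_num [mulMatrix]

theorem five_pow_dvd_norm_of_learyMinasyan_pow_mulVec_mem_range {z : GaussianInt} {m : ℕ}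
    (h : ∀ i, ((!![(3 : ℚ)/5, -4/5; 4/5, 3/5]) ^ m).mulVec (fun j => (toVec z j : ℚ)) i ∈
      Set.range (Int.cast : ℤ → ℚ)) :
    5 ^ m ∣ z.norm := by
  have hcoord : ∀ i, (5 : ℤ) ^ m ∣ toVec (⟨3, 4⟩ ^ m * z) i := fun i => by
    have hi := h i
    rw [learyMinasyan_matrix_eq, Matrix.smul_map_intCast_pow_mulVec, Pi.smul_apply, smul_eq_mul,
      inv_pow, mulMatrix_pow_mulVec_toVec] at hi
    exact Int.dvd_of_inv_mul_mem_range_intCast (by positivity) (by exact_mod_cast hi)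
  have hdvd : ((5 ^ m : ℤ) : GaussianInt) ∣ ⟨3, 4⟩ ^ m * z :=
    (intCast_dvd _ _).mpr ⟨hcoord 0, hcoord 1⟩
  have hnorm : (⟨2, -1⟩ : GaussianInt).norm = 5 := by norm_num [Zsqrtd.norm_def]
  have hsq : (⟨3, 4⟩ : GaussianInt) = star ⟨2, -1⟩ ^ 2 := by ext <;> norm_num [sq]
  rw [hsq, ← pow_mul, ← hnorm] at hdvd
  rw [← hnorm]
  exact norm_pow_dvd_norm_of_dvd_star_pow_mul prime_two_sub_i two_sub_i_not_dvd_star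
    (by exact_mod_cast hdvd)

/-- Let `M` be the 2×2 rational matrix with rows `(3/5, −4/5)` and
`(4/5, 3/5)` (the rotation matrix of the Leary–Minasyan group). Then for every finite set
`F` of nonzero vectors of `ℤ²` there exists `m ≥ 1` such that for every `x ∈ F` the
rational vector `M^m·x` has at least one coordinate that is not an integer. -/
theorem learyMinasyan_matrix_escapes_integer_lattice
    (F : Finset (Fin 2 → ℤ)) (hF : ∀ x ∈ F, x ≠ 0) :
    ∃ m : ℕ, 1 ≤ m ∧ ∀ x ∈ F, ∃ i : Fin 2,
      ((!![(3 : ℚ)/5, -4/5; 4/5, 3/5]) ^ m).mulVec (fun j => (x j : ℚ)) i ∉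
        Set.range (Int.cast : ℤ → ℚ) := by
  let toGaussianInt (x : Fin 2 → ℤ) : GaussianInt := ⟨x 0, x 1⟩
  have hlarge : ∀ x ∈ F, ∀ᶠ m in atTop, (toGaussianInt x).norm < 5 ^ m := fun x _ =>
    (tendsto_pow_atTop_atTop_of_one_lt (by norm_num : (1 : ℤ) < 5)).eventually_gt_atTop _
  obtain ⟨m, hm, hmF⟩ :=
    ((eventually_ge_atTop 1).and ((eventually_all_finset F).2 hlarge)).exists
  refine ⟨m, hm, fun x hx => ?_⟩
  have hvec : toVec (toGaussianInt x) = x := by ext i; fin_cases i <;> rfl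
  have hpos : 0 < (toGaussianInt x).norm :=
    norm_pos.mpr fun h0 => hF x hx (by rw [← hvec, h0]; ext i; fin_cases i <;> rfl)
  by_contra! hint
  rw [← hvec] at hint
  have hdvd := five_pow_dvd_norm_of_learyMinasyan_pow_mulVec_mem_range hint
  exact (Int.le_of_dvd hpos hdvd).not_gt (hmF x hx)
end

section
/- Let Aₑ and A_f be 2×2 integer matrices with nonzero determinant such that the rational matrix M = Aₑ⁻¹·A_f satisfies M₀₀ = M₁₁, M₁₀ = −M₀₁, M₀₀² + M₀₁² = 1, and M^m ≠ 1 for every integer m ≥ 1 (that is, M is a rational rotation matrix of infinite order). Let A = Aₑ·ℤ² and B = A_f·ℤ² be the subgroups of ℤ² given by their images, let φ : A → B be the group isomorphism with φ(Aₑ·x) = A_f·x for all x ∈ ℤ², and let G* be the HNN extension of ℤ² with respect to (A, B, φ), with canonical embedding ι and stable letter t satisfying t⁻¹·ι(v)·t = ι(φ(v)) for v ∈ A. Then for every finite set S of nonzero vectors of ℤ² there exists g ∈ G* such that g·ι(Aₑ·x)·g⁻¹ ∉ ι(A) for all x ∈ S. -/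
/-!
Conjugation by `t⁻¹` sends `ι (Aₑ y)` to `ι (φ (Aₑ y)) = ι (A_f y) = ι (Aₑ (M y))`, so in the coordinates
`y = Aₑ⁻¹ v` conjugation by `t⁻ⁿ` follows the orbit `y, M y, M² y, …` for as long as it stays in `ℤ²`.
As `M` is a rotation of infinite order, the orbit of a nonzero `x` consists of pairwise distinct vectors
of the same length, so only finitely many of them are integral. Once the orbit leaves `ℤ²` the conjugate
has left `A`, and by Britton's lemma no further conjugation by a positive power of `t` brings it back
into the base group. Hence `g = t⁻ⁿ` works for every `n` beyond the exit times of all `x ∈ S`.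
-/

open Filter Matrix Multiplicative HNNExtension

namespace HNNExtension

variable {G : Type*} [Group G] {A B : Subgroup G} {φ : A ≃* B}

theorem inv_t_pow_mul_of_mul_t_pow_notMem_range {b : G} (hb : b ∉ B) (n : ℕ) :
    (t ^ (n + 1))⁻¹ * of b * t ^ (n + 1) ∉ (of : G →* HNNExtension G A B φ).range := by
  intro hmem
  let w : NormalWord.ReducedWord G A B :=
    { head := 1
      toList := List.replicate n (-1, 1) ++ (-1, b) :: List.replicate (n + 1) (1, 1)
      chain := by
        refine List.IsChain.append (List.isChain_replicate_of_rel _ fun _ => rfl)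
          (List.isChain_cons.2 ⟨fun y hy h => absurd h hb,
            List.isChain_replicate_of_rel _ fun _ => rfl⟩) ?_
        intro p hp q hq
        rw [List.eq_of_mem_replicate (List.mem_of_mem_getLast? hp), ← Option.some_inj.1 hq]
        exact fun _ => rfl }
  have hprod : w.prod φ = (t ^ (n + 1))⁻¹ * of b * t ^ (n + 1) := by
    simp [w, NormalWord.ReducedWord.prod, List.prod_replicate]
    group
  simpa [w] using ReducedWord.toList_eq_nil_of_mem_of_range φ w (hprod ▸ hmem)

theorem inv_t_pow_mul_of_mul_t_pow_notMem_map {V : Type*} (c : G → V) (P : Set V) (T : V → V)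
    (hc : ∀ b : B, c b ∈ P) (hT : ∀ b : B, c (φ.symm b) = T (c b)) {g : G} {n : ℕ}
    (hg : T^[n] (c g) ∉ P) :
    (t ^ n)⁻¹ * of g * t ^ n ∉ B.map (of : G →* HNNExtension G A B φ) := by
  induction n generalizing g with
  | zero =>
    rintro ⟨b, hb, hbg⟩
    rw [pow_zero, inv_one, one_mul, mul_one] at hbg
    exact hg (of_injective φ hbg ▸ hc ⟨b, hb⟩)
  | succ n ih =>
    by_cases hgB : g ∈ B
    · have hconj : (t ^ (n + 1))⁻¹ * of g * t ^ (n + 1) =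
          ((t ^ n)⁻¹ * of (φ.symm ⟨g, hgB⟩ : G) * t ^ n : HNNExtension G A B φ) := by
        rw [equiv_symm_eq_conj]
        group
      rw [hconj]
      exact ih (by rwa [hT, ← Function.iterate_succ_apply])
    · exact fun h => inv_t_pow_mul_of_mul_t_pow_notMem_range hgB n (Subgroup.map_le_range _ _ h)

end HNNExtension

namespace Matrix

structure IsPlaneRotation {R : Type*} [CommRing R] (M : Matrix (Fin 2) (Fin 2) R) : Prop where
  diag_eq : M 0 0 = M 1 1
  antidiag_eq : M 1 0 = -M 0 1
  sq_add_sq : M 0 0 ^ 2 + M 0 1 ^ 2 = 1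

namespace IsPlaneRotation

variable {R : Type*} [CommRing R] {M N : Matrix (Fin 2) (Fin 2) R}

theorem one : IsPlaneRotation (1 : Matrix (Fin 2) (Fin 2) R) where
  diag_eq := rfl
  antidiag_eq := by simp
  sq_add_sq := by simp

theorem mul (hM : IsPlaneRotation M) (hN : IsPlaneRotation N) : IsPlaneRotation (M * N) := by
  obtain ⟨hM₁, hM₂, hM₃⟩ := hM
  obtain ⟨hN₁, hN₂, hN₃⟩ := hN
  refine ⟨?_, ?_, ?_⟩ <;> simp only [mul_apply, Fin.sum_univ_two, hM₁, hM₂, hN₁, hN₂]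
  · ring
  · ring
  · rw [hM₁] at hM₃
    rw [hN₁] at hN₃
    linear_combination (M 1 1 ^ 2 + M 0 1 ^ 2) * hN₃ + hM₃

theorem pow (hM : IsPlaneRotation M) (n : ℕ) : IsPlaneRotation (M ^ n) := by
  induction n with
  | zero => exact one
  | succ n ih => rw [pow_succ]; exact ih.mul hM

theorem det_eq_one (hM : IsPlaneRotation M) : M.det = 1 := by
  rw [det_fin_two, ← hM.diag_eq, hM.antidiag_eq, ← hM.sq_add_sq]
  ring

theorem sum_sq_mulVec (hM : IsPlaneRotation M) (v : Fin 2 → R) :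
    ∑ i, (M *ᵥ v) i ^ 2 = ∑ i, v i ^ 2 := by
  simp only [Fin.sum_univ_two, mulVec, dotProduct, ← hM.diag_eq, hM.antidiag_eq]
  linear_combination (v 0 ^ 2 + v 1 ^ 2) * hM.sq_add_sq

theorem eq_one_of_mulVec_eq_self {K : Type*} [Field K] [NeZero (2 : K)]
    {M : Matrix (Fin 2) (Fin 2) K} (hM : IsPlaneRotation M) {v : Fin 2 → K} (hv : v ≠ 0)
    (hMv : M *ᵥ v = v) : M = 1 := by
  have e₀ : M 0 0 * v 0 + M 0 1 * v 1 = v 0 := by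
    simpa [mulVec, dotProduct, Fin.sum_univ_two] using congrFun hMv 0
  have e₁ : -M 0 1 * v 0 + M 0 0 * v 1 = v 1 := by
    simpa [mulVec, dotProduct, Fin.sum_univ_two, hM.antidiag_eq, hM.diag_eq] using congrFun hMv 1
  -- `det (M - 1) = 2 - 2 M₀₀`, so `M₀₀ ≠ 1` would force `v = 0`
  have hc : M 0 0 = 1 := by
    by_contra hc
    have h2 : (2 - 2 * M 0 0 : K) ≠ 0 := by
      rw [show (2 - 2 * M 0 0 : K) = 2 * (1 - M 0 0) by ring]
      exact mul_ne_zero two_ne_zero (sub_ne_zero.2 (Ne.symm hc))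
    have h₀ : v 0 = 0 := (mul_eq_zero.1 (by
      linear_combination (M 0 0 - 1) * e₀ - M 0 1 * e₁ - v 0 * hM.sq_add_sq)).resolve_left h2
    have h₁ : v 1 = 0 := (mul_eq_zero.1 (by
      linear_combination M 0 1 * e₀ + (M 0 0 - 1) * e₁ - v 1 * hM.sq_add_sq)).resolve_left h2
    exact hv (funext fun i => by fin_cases i <;> simp [h₀, h₁])
  have hs : M 0 1 = 0 := by
    simpa [hc] using hM.sq_add_sq
  ext i j
  fin_cases i <;> fin_cases j <;> simp [hc, hs, ← hM.diag_eq, hM.antidiag_eq]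

theorem injective_pow_mulVec {K : Type*} [Field K] [NeZero (2 : K)]
    {M : Matrix (Fin 2) (Fin 2) K} (hM : IsPlaneRotation M) (hM' : ¬IsOfFinOrder M)
    {v : Fin 2 → K} (hv : v ≠ 0) : Function.Injective fun n : ℕ => M ^ n *ᵥ v := by
  refine .of_lt_imp_ne fun m n hmn h => hM' ?_
  obtain ⟨d, rfl⟩ := Nat.exists_eq_add_of_lt hmn
  have hunit : IsUnit (M ^ m) := (isUnit_iff_isUnit_det _).2 (by simp [(hM.pow m).det_eq_one])
  have hfix : M ^ (d + 1) *ᵥ v = v := by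
    apply mulVec_injective_iff_isUnit.2 hunit
    simp only [mulVec_mulVec, ← pow_add, ← add_assoc]
    exact h.symm
  exact isOfFinOrder_iff_pow_eq_one.2
    ⟨d + 1, d.succ_pos, (hM.pow _).eq_one_of_mulVec_eq_self hv hfix⟩

end IsPlaneRotation

theorem iterate_mulVec {R n : Type*} [Semiring R] [Fintype n] [DecidableEq n]
    (M : Matrix n n R) (k : ℕ) (v : n → R) : (M *ᵥ ·)^[k] v = M ^ k *ᵥ v := by
  induction k with
  | zero => simp
  | succ k ih => rw [Function.iterate_succ_apply', ih, pow_succ', mulVec_mulVec]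

theorem map_intCast_mulVec_s12 {m n S : Type*} [Fintype n] [Ring S] (C : Matrix m n ℤ) (x : n → ℤ) :
    C.map (Int.cast : ℤ → S) *ᵥ (Int.cast ∘ x) = Int.cast ∘ (C *ᵥ x) :=
  funext fun i => (RingHom.map_mulVec (Int.castRingHom S) C x i).symm

end Matrix

theorem Int.finite_setOf_sum_sq_eq {ι : Type*} [Fintype ι] (r : ℤ) :
    {y : ι → ℤ | ∑ i, y i ^ 2 = r}.Finite := by
  classical
  refine (Set.finite_Icc (fun _ => -r) fun _ => r).subset fun y hy => ?_
  have hle : ∀ i, y i ^ 2 ≤ r := fun i =>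
    hy ▸ Finset.single_le_sum (fun j _ => sq_nonneg (y j)) (Finset.mem_univ i)
  exact ⟨fun i => neg_le.1 ((Int.le_self_sq (-y i)).trans (neg_sq (y i) ▸ hle i)),
    fun i => (Int.le_self_sq _).trans (hle i)⟩

theorem Matrix.IsPlaneRotation.eventually_pow_mulVec_notMem_range_intCast
    {M : Matrix (Fin 2) (Fin 2) ℚ} (hM : IsPlaneRotation M) (hM' : ¬IsOfFinOrder M)
    {x : Fin 2 → ℤ} (hx : x ≠ 0) :
    ∀ᶠ n in atTop, M ^ n *ᵥ (Int.cast ∘ x) ∉ Set.range ((Int.cast : ℤ → ℚ) ∘ ·) := by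
  have hxq : (Int.cast ∘ x : Fin 2 → ℚ) ≠ 0 := fun h =>
    hx (funext fun i => by simpa using congrFun h i)
  have hfin := ((Int.finite_setOf_sum_sq_eq (∑ i, x i ^ 2)).image ((Int.cast : ℤ → ℚ) ∘ ·)).preimage
    (hM.injective_pow_mulVec hM' hxq).injOn
  rw [← Nat.cofinite_eq_atTop, eventually_cofinite]
  refine hfin.subset fun n hn => ?_
  obtain ⟨y, hy⟩ := not_not.1 hn
  refine ⟨y, ?_, hy⟩
  have hlength := (hM.pow n).sum_sq_mulVec (Int.cast ∘ x)
  rw [← hy] at hlength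
  simp only [Function.comp_apply] at hlength
  exact_mod_cast hlength

theorem hnn_extension_rational_rotation_conjugate_out_of_edge_subgroup_general
    (Ae Af : Matrix (Fin 2) (Fin 2) ℤ) (hAe : Ae.det ≠ 0)
    (M : Matrix (Fin 2) (Fin 2) ℚ)
    (hMdef : M = (Ae.map (Int.cast : ℤ → ℚ))⁻¹ * Af.map (Int.cast : ℤ → ℚ))
    (hM11 : M 0 0 = M 1 1) (hM10 : M 1 0 = -M 0 1)
    (hMrot : M 0 0 ^ 2 + M 0 1 ^ 2 = 1)
    (hMord : ∀ m : ℕ, 1 ≤ m → M ^ m ≠ 1)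
    (A B : Subgroup (Multiplicative (Fin 2 → ℤ)))
    (hA : ∀ v : Multiplicative (Fin 2 → ℤ), v ∈ A ↔ ∃ x : Fin 2 → ℤ, v = ofAdd (Ae.mulVec x))
    (φ : A ≃* B)
    (hφ : ∀ (a : A) (x : Fin 2 → ℤ), (a : Multiplicative (Fin 2 → ℤ)) = ofAdd (Ae.mulVec x) →
      ((φ a : B) : Multiplicative (Fin 2 → ℤ)) = ofAdd (Af.mulVec x))
    (S : Finset (Fin 2 → ℤ)) (hS : ∀ x ∈ S, x ≠ 0) :
    ∃ g : HNNExtension (Multiplicative (Fin 2 → ℤ)) B A φ.symm,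
      ∀ x ∈ S, g * HNNExtension.of (ofAdd (Ae.mulVec x)) * g⁻¹ ∉
        A.map (HNNExtension.of : Multiplicative (Fin 2 → ℤ) →*
          HNNExtension (Multiplicative (Fin 2 → ℤ)) B A φ.symm) := by
  have hM : M.IsPlaneRotation := ⟨hM11, hM10, hMrot⟩
  have hM' : ¬IsOfFinOrder M := fun h =>
    let ⟨m, hm, hMm⟩ := isOfFinOrder_iff_pow_eq_one.1 h
    hMord m hm hMm
  have hAe' : IsUnit (Ae.map (Int.cast : ℤ → ℚ)).det := by
    rw [← Int.cast_det]
    exact isUnit_iff_ne_zero.2 (Int.cast_ne_zero.2 hAe)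
  -- coordinates of `v ∈ ℤ²` with respect to the columns of `Aₑ`; in them `φ` acts as `M`
  let c : Multiplicative (Fin 2 → ℤ) → Fin 2 → ℚ := fun v =>
    (Ae.map Int.cast)⁻¹ *ᵥ (Int.cast ∘ toAdd v)
  have hc : ∀ x, c (ofAdd (Ae *ᵥ x)) = Int.cast ∘ x := fun x => by
    simp only [c, toAdd_ofAdd, ← map_intCast_mulVec_s12, mulVec_mulVec, nonsing_inv_mul _ hAe',
      one_mulVec]
  have hcφ : ∀ a : A, c (φ a) = M *ᵥ c a := fun a => by
    obtain ⟨x, hx⟩ := (hA a).1 a.2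
    simp only [c, hφ a x hx, hx, toAdd_ofAdd, ← map_intCast_mulVec_s12, mulVec_mulVec, hMdef,
      nonsing_inv_mul _ hAe', Matrix.mul_one]
  obtain ⟨N, hN⟩ := ((eventually_all_finset S).2 fun x hx =>
    hM.eventually_pow_mulVec_notMem_range_intCast hM' (hS x hx)).exists
  refine ⟨(t ^ N)⁻¹, fun x hx => ?_⟩
  rw [inv_inv]
  refine inv_t_pow_mul_of_mul_t_pow_notMem_map c (Set.range ((Int.cast : ℤ → ℚ) ∘ ·)) (M *ᵥ ·)
    (fun a => ?_) hcφ ?_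
  · obtain ⟨y, hy⟩ := (hA a).1 a.2
    exact ⟨y, by rw [hy, hc]⟩
  · rw [iterate_mulVec, hc]
    exact hN x hx

/-- Let `Aₑ, A_f` be 2×2 integer matrices with nonzero determinant such
that `M = Aₑ⁻¹·A_f` (over `ℚ`) is a rational rotation matrix of infinite order:
`M₀₀ = M₁₁`, `M₁₀ = −M₀₁`, `M₀₀² + M₀₁² = 1`, and `M^m ≠ 1` for every `m ≥ 1`. With
`A = Aₑ·ℤ²`, `B = A_f·ℤ²`, `φ : A ≃* B` with `φ (Aₑ·x) = A_f·x`, and `G*` the HNN extension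
of `ℤ²` with respect to `(A,B,φ)` (stable letter satisfying `t⁻¹·ι(v)·t = ι(φ v)` for
`v ∈ A`, realized as Mathlib's `HNNExtension _ B A φ.symm`): for every finite set `S` of
nonzero vectors of `ℤ²` there exists `g ∈ G*` with `g·ι(Aₑ·x)·g⁻¹ ∉ ι(A)` for all `x ∈ S`. -/
theorem hnn_extension_rational_rotation_conjugate_out_of_edge_subgroup
    (Ae Af : Matrix (Fin 2) (Fin 2) ℤ) (hAe : Ae.det ≠ 0) (hAf : Af.det ≠ 0)
    (M : Matrix (Fin 2) (Fin 2) ℚ)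
    (hMdef : M = (Ae.map (Int.cast : ℤ → ℚ))⁻¹ * Af.map (Int.cast : ℤ → ℚ))
    (hM11 : M 0 0 = M 1 1) (hM10 : M 1 0 = -M 0 1)
    (hMrot : M 0 0 ^ 2 + M 0 1 ^ 2 = 1)
    (hMord : ∀ m : ℕ, 1 ≤ m → M ^ m ≠ 1)
    (A B : Subgroup (Multiplicative (Fin 2 → ℤ)))
    (hA : ∀ v : Multiplicative (Fin 2 → ℤ), v ∈ A ↔ ∃ x : Fin 2 → ℤ, v = ofAdd (Ae.mulVec x))
    (hB : ∀ v : Multiplicative (Fin 2 → ℤ), v ∈ B ↔ ∃ x : Fin 2 → ℤ, v = ofAdd (Af.mulVec x))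
    (φ : A ≃* B)
    (hφ : ∀ (a : A) (x : Fin 2 → ℤ), (a : Multiplicative (Fin 2 → ℤ)) = ofAdd (Ae.mulVec x) →
      ((φ a : B) : Multiplicative (Fin 2 → ℤ)) = ofAdd (Af.mulVec x))
    (S : Finset (Fin 2 → ℤ)) (hS : ∀ x ∈ S, x ≠ 0) :
    ∃ g : HNNExtension (Multiplicative (Fin 2 → ℤ)) B A φ.symm,
      ∀ x ∈ S, g * HNNExtension.of (ofAdd (Ae.mulVec x)) * g⁻¹ ∉
        A.map (HNNExtension.of : Multiplicative (Fin 2 → ℤ) →*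
          HNNExtension (Multiplicative (Fin 2 → ℤ)) B A φ.symm) :=
  hnn_extension_rational_rotation_conjugate_out_of_edge_subgroup_general Ae Af hAe M hMdef hM11 hM10
    hMrot hMord A B hA φ hφ S hS
end
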